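/- arXiv:1009.1981 — 5 statements merged into one kernel-verified Lean document; each statement's English description precedes it below -/
import Mathlib

section
/- Crandall–Liggett theorem: Let X be a Banach space, ω ∈ ℝ, and let A ⊆ X × X be ω-m-dissipative. Then for every x ∈ X and every t ≥ 0 the limit T(t)x := lim_{n→∞} (J_{t/n}^A)^n x exists in X (the iterated resolvents being defined for all n with tω/n < 1), and the resulting family (T(t))_{t≥0} is a strongly continuous semigroup of type ω on X, i.e. T(0) = I, T(t)T(s)x = T(t+s)x for all t,s ≥ 0 and x ∈ X, ‖T(t)x − T(t)y‖ ≤ e^{ωt}‖x − y‖ for all x,y ∈ X, and for each x ∈ X the map t ↦ T(t)x is continuous on [0,∞). -/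
open Filter Set

/-- A (possibly multivalued) operator `A ⊆ X × X` is dissipative if
`‖x₁ - x₂‖ ≤ ‖x₁ - x₂ - α (y₁ - y₂)‖` for all `α > 0` and `(x₁,y₁), (x₂,y₂) ∈ A`. -/
def IsDissipativeSet {X : Type*} [NormedAddCommGroup X] [NormedSpace ℝ X]
    (A : Set (X × X)) : Prop :=
  ∀ α : ℝ, 0 < α → ∀ a ∈ A, ∀ b ∈ A,
    ‖a.1 - b.1‖ ≤ ‖a.1 - b.1 - α • (a.2 - b.2)‖

/-- `A` is m-dissipative: dissipative, densely defined, and `ran (I - αA) = X`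
for every `α > 0`. -/
def IsMDissipativeSet {X : Type*} [NormedAddCommGroup X] [NormedSpace ℝ X]
    (A : Set (X × X)) : Prop :=
  IsDissipativeSet A ∧ Dense {x : X | ∃ y, (x, y) ∈ A} ∧
    ∀ α : ℝ, 0 < α → ∀ w : X, ∃ a ∈ A, w = a.1 - α • a.2

/-- The shifted operator `A - ωI = {(x, y - ωx) : (x,y) ∈ A}`; `A` is
`ω`-m-dissipative iff `opShift A ω` is m-dissipative. -/
def opShift {X : Type*} [AddCommGroup X] [Module ℝ X]
    (A : Set (X × X)) (ω : ℝ) : Set (X × X) :=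
  {q | ∃ a ∈ A, q = (a.1, a.2 - ω • a.1)}

/-!
The resolvents `J_α = (I - α A)⁻¹` are `(1 - α ω)⁻¹`-Lipschitz and satisfy the resolvent identity
`J_α = J_β (β/α • I + (1 - β/α) • J_α)` for `β ≤ α`. For `(x, y) ∈ A` this makes
`a m n = ‖J_α^m x - J_β^n x‖` satisfy, up to exponential weights,
`a (m+1) (n+1) ≤ β/α · a m n + (1 - β/α) · a (m+1) n`, with boundary values `a m 0 ≲ m α ‖y‖`.
The concave function `√((m α - n β)² + m α² + n β²)` satisfies the reverse recursion, so it
dominates `a / ‖y‖`. Hence `J_α^m x` converges as `α → 0⁺`, `m α → t`, and in the limit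
`‖T(t) x - T(s) x‖ ≲ |t - s| ‖y‖`; since the `J_α^m` are uniformly Lipschitz for bounded `m α`,
convergence and continuity in `t` extend from the dense set `D(A)` to all of `X`. The semigroup law comes from
`J_α^(m + k) = J_α^m ∘ J_α^k`.
-/

open Topology

theorem inv_one_sub_le_exp {a : ℝ} (ha : |a| ≤ 1 / 2) : (1 - a)⁻¹ ≤ Real.exp (2 * |a|) := by
  have h1 : 0 < 1 - a := by linarith [le_abs_self a]
  rw [inv_le_iff_one_le_mul₀' h1]
  calc 1 ≤ (1 - a) * (1 + 2 * |a|) := by cases abs_cases a <;> nlinarith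
    _ ≤ (1 - a) * Real.exp (2 * |a|) := by
        gcongr
        linarith [Real.add_one_le_exp (2 * |a|)]

noncomputable def clBound (α β : ℝ) (m n : ℕ) : ℝ :=
  √((m * α - n * β) ^ 2 + m * α ^ 2 + n * β ^ 2)

theorem clBound_comm (α β : ℝ) (m n : ℕ) : clBound α β m n = clBound β α n m := by
  unfold clBound
  ring_nf

theorem mul_le_clBound_left (α β : ℝ) (m : ℕ) : m * α ≤ clBound α β m 0 := by
  refine Real.le_sqrt_of_sq_le ?_
  push_cast
  nlinarith [mul_nonneg (Nat.cast_nonneg (α := ℝ) m) (sq_nonneg α)]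

theorem clBound_rec {α β : ℝ} (hβ : 0 < β) (hβα : β ≤ α) (m n : ℕ) :
    β / α * clBound α β m n + (1 - β / α) * clBound α β (m + 1) n ≤
      clBound α β (m + 1) (n + 1) := by
  have hα : 0 < α := hβ.trans_le hβα
  have hc : β / α ≤ 1 := (div_le_one hα).2 hβα
  calc β / α * clBound α β m n + (1 - β / α) * clBound α β (m + 1) n
      ≤ √(β / α * ((m * α - n * β) ^ 2 + m * α ^ 2 + n * β ^ 2) +
          (1 - β / α) * (((m + 1 : ℕ) * α - n * β) ^ 2 + (m + 1 : ℕ) * α ^ 2 + n * β ^ 2)) :=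
        Real.strictConcaveOn_sqrt.concaveOn.2 (by simp; positivity) (by simp; positivity)
          (by positivity) (by linarith) (by ring)
    _ ≤ clBound α β (m + 1) (n + 1) := by
        -- the mixture falls short of the next value by exactly `2 β²`
        refine Real.sqrt_le_sqrt (le_of_sub_nonneg ?_)
        field_simp
        push_cast
        ring_nf
        positivity

theorem le_pow_mul_clBound {α β p q r : ℝ} (hβ : 0 < β) (hβα : β ≤ α) (hp : 1 ≤ p)
    (hq : 0 ≤ q) (hr : 0 ≤ r) {a : ℕ → ℕ → ℝ} (ha₀ : ∀ m, a m 0 ≤ p ^ m * r * (m * α))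
    (h₀a : ∀ n, a 0 n ≤ q ^ n * r * (n * β))
    (hrec : ∀ m n, a (m + 1) (n + 1) ≤ q * (β / α * a m n + (1 - β / α) * a (m + 1) n))
    (m n : ℕ) : a m n ≤ p ^ m * q ^ n * r * clBound α β m n := by
  have hα : 0 < α := hβ.trans_le hβα
  have hc : β / α ≤ 1 := (div_le_one hα).2 hβα
  induction n generalizing m with
  | zero =>
    simpa using (ha₀ m).trans
      (mul_le_mul_of_nonneg_left (mul_le_clBound_left α β m) (by positivity))
  | succ n ih =>
    cases m with
    | zero =>
      have := mul_le_clBound_left β α (n + 1)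
      rw [← clBound_comm] at this
      simpa using (h₀a (n + 1)).trans (mul_le_mul_of_nonneg_left this (by positivity))
    | succ m =>
      have hpm : p ^ m * q ^ n * r * clBound α β m n ≤
          p ^ (m + 1) * q ^ n * r * clBound α β m n := by
        have : 0 ≤ clBound α β m n := Real.sqrt_nonneg _
        gcongr
        exact m.le_succ
      calc a (m + 1) (n + 1) ≤ q * (β / α * a m n + (1 - β / α) * a (m + 1) n) := hrec m n
        _ ≤ q * (β / α * (p ^ (m + 1) * q ^ n * r * clBound α β m n) +
              (1 - β / α) * (p ^ (m + 1) * q ^ n * r * clBound α β (m + 1) n)) := by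
            have := (ih m).trans hpm
            have := ih (m + 1)
            gcongr
        _ = p ^ (m + 1) * q ^ (n + 1) * r *
              (β / α * clBound α β m n + (1 - β / α) * clBound α β (m + 1) n) := by ring
        _ ≤ p ^ (m + 1) * q ^ (n + 1) * r * clBound α β (m + 1) (n + 1) := by
            gcongr
            exact clBound_rec hβ hβα m n

theorem tendsto_dist_of_dense {ι α β : Type*} [PseudoMetricSpace α] [PseudoMetricSpace β]
    {l : Filter ι} {F G : ι → α → β} {s : Set α} {C : ℝ} (hs : Dense s)
    (hF : ∀ᶠ i in l, ∀ x y, dist (F i x) (F i y) ≤ C * dist x y)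
    (hG : ∀ᶠ i in l, ∀ x y, dist (G i x) (G i y) ≤ C * dist x y)
    (h : ∀ z ∈ s, Tendsto (fun i => dist (F i z) (G i z)) l (𝓝 0)) (x : α) :
    Tendsto (fun i => dist (F i x) (G i x)) l (𝓝 0) := by
  rw [Metric.tendsto_nhds]
  intro ε hε
  have hnear : ∀ᶠ z in 𝓝 x, 2 * C * dist z x < ε / 2 := by
    have : Tendsto (fun z => 2 * C * dist z x) (𝓝 x) (𝓝 (2 * C * dist x x)) :=
      (by fun_prop : Continuous fun z => 2 * C * dist z x).tendsto x
    rw [dist_self, mul_zero] at this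
    exact this.eventually (gt_mem_nhds (half_pos hε))
  obtain ⟨z, hzx, hzs⟩ := mem_closure_iff_nhds.1 (hs x) _ hnear
  filter_upwards [hF, hG, Metric.tendsto_nhds.1 (h z hzs) _ (half_pos hε)] with i hFi hGi hi
  rw [Real.dist_0_eq_abs, abs_of_nonneg dist_nonneg] at hi ⊢
  calc dist (F i x) (G i x)
      ≤ dist (F i x) (F i z) + dist (F i z) (G i z) + dist (G i z) (G i x) :=
        dist_triangle4 _ _ _ _
    _ ≤ C * dist x z + dist (F i z) (G i z) + C * dist z x := by
        gcongr
        · exact hFi x z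
        · exact hGi z x
    _ < ε := by
        rw [dist_comm x z]
        linarith [show 2 * C * dist z x < ε / 2 from hzx]

def stepTime (p : ℝ × ℕ) : ℝ := p.2 * p.1

/-- Pairs `(α, m)` of a step size and a number of steps with `α → 0⁺` and `m α → t`. -/
def stepFilter (t : ℝ) : Filter (ℝ × ℕ) :=
  comap Prod.fst (𝓝[>] 0) ⊓ comap stepTime (𝓝 t)

theorem tendsto_stepFilter_iff {ι : Type*} {l : Filter ι} {f : ι → ℝ × ℕ} {t : ℝ} :
    Tendsto f l (stepFilter t) ↔
      Tendsto (fun i => (f i).1) l (𝓝[>] 0) ∧ Tendsto (fun i => stepTime (f i)) l (𝓝 t) := by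
  simp only [stepFilter, tendsto_inf, tendsto_comap_iff]
  rfl

theorem tendsto_stepFilter_floor {t : ℝ} (ht : 0 ≤ t) :
    Tendsto (fun n : ℕ => ((n : ℝ)⁻¹, ⌊t * n⌋₊)) atTop (stepFilter t) := by
  refine tendsto_stepFilter_iff.2
    ⟨tendsto_inv_atTop_nhdsGT_zero.comp tendsto_natCast_atTop_atTop, ?_⟩
  exact ((tendsto_nat_floor_mul_div_atTop ht).comp tendsto_natCast_atTop_atTop).congr fun n => by
    simp [stepTime, div_eq_mul_inv]

theorem stepFilter_neBot {t : ℝ} (ht : 0 ≤ t) : (stepFilter t).NeBot :=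
  (tendsto_stepFilter_floor ht).neBot

theorem tendsto_stepFilter_div {t : ℝ} (ht : 0 < t) :
    Tendsto (fun n : ℕ => (t / n, n)) atTop (stepFilter t) := by
  refine tendsto_stepFilter_iff.2 ⟨?_, tendsto_const_nhds.congr' ?_⟩
  · refine tendsto_nhdsWithin_iff.2 ⟨tendsto_const_div_atTop_nhds_zero_nat t, ?_⟩
    filter_upwards [eventually_gt_atTop 0] with n hn
    exact div_pos ht (Nat.cast_pos.2 hn)
  · filter_upwards [eventually_gt_atTop 0] with n hn
    simp [stepTime, mul_div_cancel₀ t (Nat.cast_ne_zero.2 hn.ne')]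

theorem eventually_stepFilter (t ω : ℝ) :
    ∀ᶠ p in stepFilter t, 0 < p.1 ∧ |p.1 * ω| ≤ 1 / 2 ∧ stepTime p ≤ t + 1 := by
  have hfst : Tendsto Prod.fst (stepFilter t) (𝓝[>] 0) := (tendsto_stepFilter_iff.1 tendsto_id).1
  have htime : Tendsto stepTime (stepFilter t) (𝓝 t) := (tendsto_stepFilter_iff.1 tendsto_id).2
  have hsmall : Tendsto (fun p : ℝ × ℕ => |p.1 * ω|) (stepFilter t) (𝓝 0) := by
    simpa using ((tendsto_nhdsWithin_iff.1 hfst).1.mul_const ω).abs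
  filter_upwards [hfst self_mem_nhdsWithin,
    hsmall.eventually (ge_mem_nhds (by norm_num : (0 : ℝ) < 1 / 2)),
    htime.eventually (ge_mem_nhds (lt_add_one t))] with p hp h1 h2
  exact ⟨hp, h1, h2⟩

theorem tendsto_clBound (ω t s : ℝ) :
    Tendsto (fun pq : (ℝ × ℕ) × (ℝ × ℕ) =>
        Real.exp (2 * |ω| * (stepTime pq.1 + stepTime pq.2)) *
          clBound pq.1.1 pq.2.1 pq.1.2 pq.2.2)
      (stepFilter t ×ˢ stepFilter s) (𝓝 (Real.exp (2 * |ω| * (t + s)) * |t - s|)) := by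
  obtain ⟨hp₀, hp⟩ := tendsto_stepFilter_iff.1 (tendsto_fst (f := stepFilter t) (g := stepFilter s))
  obtain ⟨hq₀, hq⟩ := tendsto_stepFilter_iff.1 (tendsto_snd (f := stepFilter t) (g := stepFilter s))
  have hsqrt := ((((hp.sub hq).pow 2).add (hp.mul (tendsto_nhdsWithin_iff.1 hp₀).1)).add
    (hq.mul (tendsto_nhdsWithin_iff.1 hq₀).1)).sqrt
  rw [mul_zero, mul_zero, add_zero, add_zero, Real.sqrt_sq_eq_abs] at hsqrt
  refine (((hp.add hq).const_mul (2 * |ω|)).rexp.mul hsqrt).congr fun pq => ?_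
  simp only [clBound, stepTime]
  ring_nf

section

variable {X : Type*} [NormedAddCommGroup X] [NormedSpace ℝ X] {A : Set (X × X)} {ω α : ℝ}

open Classical in
/-- `(I - α A)⁻¹ w`; outside the range of `I - α A` it is `w`. -/
noncomputable def setResolvent (A : Set (X × X)) (α : ℝ) (w : X) : X :=
  if h : ∃ p ∈ A, p.1 - α • p.2 = w then h.choose.1 else w

theorem setResolvent_spec {w : X} (h : ∃ p ∈ A, p.1 - α • p.2 = w) :
    ∃ v, (setResolvent A α w, v) ∈ A ∧ setResolvent A α w - α • v = w := by
  rw [setResolvent, dif_pos h]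
  exact ⟨h.choose.2, h.choose_spec.1, h.choose_spec.2⟩

theorem setResolvent_zero (A : Set (X × X)) : setResolvent A 0 = id := by
  funext w
  rw [setResolvent]
  split_ifs with h
  · simpa using h.choose_spec.2
  · rfl

theorem IsDissipativeSet.norm_sub_le (hd : IsDissipativeSet (opShift A ω)) (hα : 0 ≤ α)
    (hαω : α * ω < 1) {p q : X × X} (hp : p ∈ A) (hq : q ∈ A) :
    ‖p.1 - q.1‖ ≤ (1 - α * ω)⁻¹ * ‖p.1 - α • p.2 - (q.1 - α • q.2)‖ := by
  have hc : 0 < 1 - α * ω := by linarith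
  rcases hα.eq_or_lt with rfl | hα
  · simp
  -- dissipativity of `A - ω I` with the step `α / (1 - α ω)`
  have key := hd (α / (1 - α * ω)) (by positivity) _ ⟨p, hp, rfl⟩ _ ⟨q, hq, rfl⟩
  have hv : p.1 - q.1 - (α / (1 - α * ω)) • ((p.2 - ω • p.1) - (q.2 - ω • q.1))
      = (1 - α * ω)⁻¹ • (p.1 - α • p.2 - (q.1 - α • q.2)) := by
    match_scalars <;> field_simp <;> ring
  rwa [hv, norm_smul, Real.norm_of_nonneg (inv_pos.2 hc).le] at key

theorem IsDissipativeSet.setResolvent_sub_smul (hd : IsDissipativeSet (opShift A ω))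
    (hα : 0 ≤ α) (hαω : α * ω < 1) {x y : X} (hxy : (x, y) ∈ A) :
    setResolvent A α (x - α • y) = x := by
  obtain ⟨v, hv, hvx⟩ := setResolvent_spec ⟨(x, y), hxy, rfl⟩
  have := hd.norm_sub_le hα hαω hv hxy
  rw [hvx, sub_self, norm_zero, mul_zero] at this
  exact sub_eq_zero.1 (norm_le_zero_iff.1 this)

namespace IsMDissipativeSet

variable (hA : IsMDissipativeSet (opShift A ω))
include hA

theorem exists_mem_sub_smul_eq (hα : 0 < α) (hαω : α * ω < 1) (w : X) :
    ∃ p ∈ A, p.1 - α • p.2 = w := by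
  have hc : 0 < 1 - α * ω := by linarith
  obtain ⟨_, ⟨p, hp, rfl⟩, hw⟩ :=
    hA.2.2 (α / (1 - α * ω)) (by positivity) ((1 - α * ω)⁻¹ • w)
  refine ⟨p, hp, smul_right_injective X (inv_pos.2 hc).ne' ?_⟩
  show (1 - α * ω)⁻¹ • (p.1 - α • p.2) = (1 - α * ω)⁻¹ • w
  rw [hw]
  match_scalars <;> field_simp
  ring

theorem dense_domain : Dense {x : X | ∃ y, (x, y) ∈ A} := by
  convert hA.2.1 using 1
  ext x
  constructor
  · rintro ⟨y, hxy⟩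
    exact ⟨y - ω • x, (x, y), hxy, rfl⟩
  · rintro ⟨_, p, hp, hpx⟩
    obtain ⟨rfl, -⟩ := Prod.ext_iff.1 hpx
    exact ⟨p.2, hp⟩

theorem exists_mem_setResolvent (hα : 0 < α) (hαω : α * ω < 1) (w : X) :
    ∃ v, (setResolvent A α w, v) ∈ A ∧ setResolvent A α w - α • v = w :=
  setResolvent_spec (hA.exists_mem_sub_smul_eq hα hαω w)

theorem norm_setResolvent_sub_le (hα : 0 < α) (hαω : α * ω < 1) (w w' : X) :
    ‖setResolvent A α w - setResolvent A α w'‖ ≤ (1 - α * ω)⁻¹ * ‖w - w'‖ := by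
  obtain ⟨v, hv, hvw⟩ := hA.exists_mem_setResolvent hα hαω w
  obtain ⟨v', hv', hvw'⟩ := hA.exists_mem_setResolvent hα hαω w'
  simpa [hvw, hvw'] using hA.1.norm_sub_le hα.le hαω hv hv'

theorem setResolvent_identity {β : ℝ} (hβ : 0 < β) (hβα : β ≤ α) (hαω : α * ω < 1) (w : X) :
    setResolvent A α w =
      setResolvent A β ((β / α) • w + (1 - β / α) • setResolvent A α w) := by
  have hα : 0 < α := hβ.trans_le hβα
  have hβω : β * ω < 1 := by rcases le_or_gt ω 0 with h | h <;> nlinarith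
  obtain ⟨v, hv, hvw⟩ := hA.exists_mem_setResolvent hα hαω w
  -- with `u - α v = w` one has `(β / α) w + (1 - β / α) u = u - β v`
  generalize setResolvent A α w = u at hv hvw ⊢
  convert (hA.1.setResolvent_sub_smul hβ.le hβω hv).symm using 2
  rw [← hvw]
  match_scalars <;> field_simp
  ring

theorem norm_setResolvent_iterate_sub_le (hα : 0 < α) (hαω : α * ω < 1) (m : ℕ) (w w' : X) :
    ‖(setResolvent A α)^[m] w - (setResolvent A α)^[m] w'‖ ≤
      (1 - α * ω)⁻¹ ^ m * ‖w - w'‖ := by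
  induction m with
  | zero => simp
  | succ m ih =>
    rw [Function.iterate_succ_apply', Function.iterate_succ_apply', pow_succ', mul_assoc]
    have : 0 ≤ (1 - α * ω)⁻¹ := inv_nonneg.2 (by linarith)
    exact (hA.norm_setResolvent_sub_le hα hαω _ _).trans (by gcongr)

theorem norm_setResolvent_iterate_sub_self_le (hα : 0 < α) (hαω : |α * ω| ≤ 1 / 2)
    {x y : X} (hxy : (x, y) ∈ A) (m : ℕ) :
    ‖(setResolvent A α)^[m] x - x‖ ≤ Real.exp (2 * |α * ω|) ^ m * ‖y‖ * (m * α) := by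
  set J := setResolvent A α
  set E := Real.exp (2 * |α * ω|)
  have hαω' : α * ω < 1 := by linarith [le_abs_self (α * ω)]
  have hc : (1 - α * ω)⁻¹ ≤ E := inv_one_sub_le_exp hαω
  have hE : 1 ≤ E := Real.one_le_exp (by positivity)
  have hstep : ‖J x - x‖ ≤ E * (α * ‖y‖) := by
    have hJ : J (x - α • y) = x := hA.1.setResolvent_sub_smul hα.le hαω' hxy
    calc ‖J x - x‖ = ‖J x - J (x - α • y)‖ := by rw [hJ]
      _ ≤ (1 - α * ω)⁻¹ * ‖x - (x - α • y)‖ := hA.norm_setResolvent_sub_le hα hαω' _ _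
      _ ≤ E * (α * ‖y‖) := by
          rw [sub_sub_cancel, norm_smul, Real.norm_of_nonneg hα.le]
          gcongr
  induction m with
  | zero => simp
  | succ m ih =>
    calc ‖J^[m + 1] x - x‖ ≤ ‖J (J^[m] x) - J x‖ + ‖J x - x‖ := by
          rw [Function.iterate_succ_apply']
          exact norm_sub_le_norm_sub_add_norm_sub _ _ _
      _ ≤ E * (E ^ m * ‖y‖ * (m * α)) + E ^ (m + 1) * (α * ‖y‖) := by
          gcongr
          · exact (hA.norm_setResolvent_sub_le hα hαω' _ _).trans (by gcongr)
          · exact hstep.trans (by gcongr; exact le_self_pow₀ hE m.succ_ne_zero)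
      _ = E ^ (m + 1) * ‖y‖ * ((m + 1 : ℕ) * α) := by
          push_cast
          ring

theorem norm_setResolvent_iterate_sub_iterate_le {β : ℝ} (hβ : 0 < β) (hβα : β ≤ α)
    (hαω : |α * ω| ≤ 1 / 2) {x y : X} (hxy : (x, y) ∈ A) (m n : ℕ) :
    ‖(setResolvent A α)^[m] x - (setResolvent A β)^[n] x‖ ≤
      Real.exp (2 * |α * ω|) ^ m * Real.exp (2 * |β * ω|) ^ n * ‖y‖ * clBound α β m n := by
  have hα : 0 < α := hβ.trans_le hβα
  have hαω' : α * ω < 1 := by linarith [le_abs_self (α * ω)]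
  have hβω : |β * ω| ≤ 1 / 2 := by
    refine le_trans ?_ hαω
    rw [abs_mul, abs_mul, abs_of_pos hα, abs_of_pos hβ]
    gcongr
  have hβω' : β * ω < 1 := by linarith [le_abs_self (β * ω)]
  have hc : β / α ≤ 1 := (div_le_one hα).2 hβα
  set J := setResolvent A α
  set K := setResolvent A β
  refine le_pow_mul_clBound (p := Real.exp (2 * |α * ω|)) (q := Real.exp (2 * |β * ω|))
    (a := fun m n => ‖J^[m] x - K^[n] x‖) hβ hβα (Real.one_le_exp (by positivity))
    (by positivity) (norm_nonneg y) (hA.norm_setResolvent_iterate_sub_self_le hα hαω hxy)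
    (fun n => by
      simpa [norm_sub_rev] using hA.norm_setResolvent_iterate_sub_self_le hβ hβω hxy n)
    (fun m n => ?_) m n
  have hJ : J^[m + 1] x = K ((β / α) • J^[m] x + (1 - β / α) • J^[m + 1] x) := by
    rw [Function.iterate_succ_apply']
    exact hA.setResolvent_identity hβ hβα hαω' _
  calc ‖J^[m + 1] x - K^[n + 1] x‖
      = ‖K ((β / α) • J^[m] x + (1 - β / α) • J^[m + 1] x) - K (K^[n] x)‖ := by
        rw [← hJ, Function.iterate_succ_apply' K]
    _ ≤ (1 - β * ω)⁻¹ *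
          ‖(β / α) • (J^[m] x - K^[n] x) + (1 - β / α) • (J^[m + 1] x - K^[n] x)‖ := by
        refine (hA.norm_setResolvent_sub_le hβ hβω' _ _).trans_eq ?_
        congr 2
        module
    _ ≤ Real.exp (2 * |β * ω|) *
          (β / α * ‖J^[m] x - K^[n] x‖ + (1 - β / α) * ‖J^[m + 1] x - K^[n] x‖) := by
        refine mul_le_mul (inv_one_sub_le_exp hβω) ((norm_add_le _ _).trans_eq ?_)
          (norm_nonneg _) (Real.exp_pos _).le
        rw [norm_smul, norm_smul, Real.norm_of_nonneg (by positivity),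
          Real.norm_of_nonneg (by linarith)]

theorem dist_setResolvent_iterate_le {β : ℝ} (hα : 0 < α) (hβ : 0 < β)
    (hαω : |α * ω| ≤ 1 / 2) (hβω : |β * ω| ≤ 1 / 2) {x y : X} (hxy : (x, y) ∈ A) (m n : ℕ) :
    dist ((setResolvent A α)^[m] x) ((setResolvent A β)^[n] x) ≤
      Real.exp (2 * |ω| * (m * α + n * β)) * clBound α β m n * ‖y‖ := by
  have key : ∀ {α β : ℝ}, 0 < β → β ≤ α → |α * ω| ≤ 1 / 2 → ∀ m n : ℕ,
      dist ((setResolvent A α)^[m] x) ((setResolvent A β)^[n] x) ≤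
        Real.exp (2 * |ω| * (m * α + n * β)) * clBound α β m n * ‖y‖ := by
    intro α β hβ hβα hαω m n
    rw [dist_eq_norm]
    refine (hA.norm_setResolvent_iterate_sub_iterate_le hβ hβα hαω hxy m n).trans_eq ?_
    rw [← Real.exp_nat_mul, ← Real.exp_nat_mul, ← Real.exp_add, abs_mul, abs_mul,
      abs_of_pos (hβ.trans_le hβα), abs_of_pos hβ]
    ring_nf
  rcases le_total β α with h | h
  · exact key hβ h hαω m n
  · rw [dist_comm, clBound_comm, add_comm]
    exact key hα h hβω n m

theorem eventually_lipschitz_setResolvent_iterate (t : ℝ) :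
    ∀ᶠ p in stepFilter t, ∀ w w' : X,
      dist ((setResolvent A p.1)^[p.2] w) ((setResolvent A p.1)^[p.2] w') ≤
        Real.exp (2 * |ω| * (t + 1)) * dist w w' := by
  filter_upwards [eventually_stepFilter t ω] with p ⟨hp, hpω, hpt⟩ w w'
  rw [dist_eq_norm, dist_eq_norm]
  have hc : 0 < 1 - p.1 * ω := by linarith [le_abs_self (p.1 * ω)]
  refine (hA.norm_setResolvent_iterate_sub_le hp (by linarith) p.2 w w').trans ?_
  gcongr
  calc (1 - p.1 * ω)⁻¹ ^ p.2 ≤ Real.exp (2 * |p.1 * ω|) ^ p.2 := by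
        gcongr
        exact inv_one_sub_le_exp hpω
    _ = Real.exp (2 * |ω| * stepTime p) := by
        rw [← Real.exp_nat_mul, abs_mul, abs_of_pos hp, stepTime]
        ring_nf
    _ ≤ Real.exp (2 * |ω| * (t + 1)) := by gcongr

theorem eventually_dist_setResolvent_iterate_le_clBound {z y : X} (hzy : (z, y) ∈ A)
    (t s : ℝ) :
    ∀ᶠ pq in stepFilter t ×ˢ stepFilter s,
      dist ((setResolvent A pq.1.1)^[pq.1.2] z) ((setResolvent A pq.2.1)^[pq.2.2] z) ≤
        Real.exp (2 * |ω| * (stepTime pq.1 + stepTime pq.2)) *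
          clBound pq.1.1 pq.2.1 pq.1.2 pq.2.2 * ‖y‖ := by
  filter_upwards [(eventually_stepFilter t ω).prod_mk (eventually_stepFilter s ω)] with
    pq ⟨⟨hp, hpω, _⟩, ⟨hq, hqω, _⟩⟩
  exact hA.dist_setResolvent_iterate_le hp hq hpω hqω hzy _ _

theorem cauchy_map_stepFilter {t : ℝ} (ht : 0 ≤ t) (x : X) :
    Cauchy (map (fun p => (setResolvent A p.1)^[p.2] x) (stepFilter t)) := by
  have := stepFilter_neBot ht
  refine cauchy_map_iff.2 ⟨inferInstance, tendsto_uniformity_iff_dist_tendsto_zero.2 ?_⟩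
  refine tendsto_dist_of_dense
    (F := fun pq : (ℝ × ℕ) × (ℝ × ℕ) => (setResolvent A pq.1.1)^[pq.1.2])
    (G := fun pq => (setResolvent A pq.2.1)^[pq.2.2]) hA.dense_domain
    ((hA.eventually_lipschitz_setResolvent_iterate t).prod_inl _)
    ((hA.eventually_lipschitz_setResolvent_iterate t).prod_inr _) ?_ x
  rintro z ⟨y, hzy⟩
  have hbound := (tendsto_clBound ω t t).mul_const ‖y‖
  rw [sub_self, abs_zero, mul_zero, zero_mul] at hbound
  exact squeeze_zero' (Eventually.of_forall fun _ => dist_nonneg)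
    (hA.eventually_dist_setResolvent_iterate_le_clBound hzy t t) hbound

end IsMDissipativeSet

/-- The exponential formula `T(t) x = lim (I - α A)⁻ᵐ x` as `α → 0⁺`, `m α → t`. -/
noncomputable def clSemigroup (A : Set (X × X)) (t : ℝ) (x : X) : X :=
  limUnder (stepFilter t) fun p => (setResolvent A p.1)^[p.2] x

namespace IsMDissipativeSet

variable [CompleteSpace X] (hA : IsMDissipativeSet (opShift A ω))
include hA

theorem tendsto_clSemigroup {t : ℝ} (ht : 0 ≤ t) (x : X) :
    Tendsto (fun p => (setResolvent A p.1)^[p.2] x) (stepFilter t) (𝓝 (clSemigroup A t x)) :=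
  tendsto_nhds_limUnder (CompleteSpace.complete (hA.cauchy_map_stepFilter ht x))

theorem clSemigroup_zero (x : X) : clSemigroup A 0 x = x :=
  tendsto_nhds_unique
    ((hA.tendsto_clSemigroup le_rfl x).comp (tendsto_stepFilter_floor le_rfl))
    (by simp [Function.comp_def])

theorem dist_clSemigroup_le {z y : X} (hzy : (z, y) ∈ A) {t s : ℝ} (ht : 0 ≤ t) (hs : 0 ≤ s) :
    dist (clSemigroup A t z) (clSemigroup A s z) ≤
      Real.exp (2 * |ω| * (t + s)) * |t - s| * ‖y‖ := by
  have := stepFilter_neBot ht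
  have := stepFilter_neBot hs
  exact le_of_tendsto_of_tendsto
    (((hA.tendsto_clSemigroup ht z).comp tendsto_fst).dist
      ((hA.tendsto_clSemigroup hs z).comp tendsto_snd))
    ((tendsto_clBound ω t s).mul_const ‖y‖)
    (hA.eventually_dist_setResolvent_iterate_le_clBound hzy t s)

theorem tendsto_setResolvent_iterate_div {t : ℝ} (ht : 0 ≤ t) (x : X) :
    Tendsto (fun n : ℕ => (setResolvent A (t / n))^[n] x) atTop (𝓝 (clSemigroup A t x)) := by
  rcases ht.eq_or_lt with rfl | ht
  · simp [setResolvent_zero, hA.clSemigroup_zero]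
  · exact (hA.tendsto_clSemigroup ht.le x).comp (tendsto_stepFilter_div ht)

theorem norm_clSemigroup_sub_le {t : ℝ} (ht : 0 ≤ t) (x x' : X) :
    ‖clSemigroup A t x - clSemigroup A t x'‖ ≤ Real.exp (ω * t) * ‖x - x'‖ := by
  rcases ht.eq_or_lt with rfl | ht
  · simp [hA.clSemigroup_zero]
  have hgrowth : Tendsto (fun n : ℕ => (1 - t / n * ω)⁻¹ ^ n) atTop (𝓝 (Real.exp (ω * t))) := by
    have := (Real.tendsto_one_add_div_pow_exp (-(t * ω))).inv₀ (Real.exp_ne_zero _)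
    rw [← Real.exp_neg, neg_neg, mul_comm] at this
    refine this.congr fun n => ?_
    rw [inv_pow]
    ring_nf
  refine le_of_tendsto_of_tendsto
    ((hA.tendsto_setResolvent_iterate_div ht.le x).sub
      (hA.tendsto_setResolvent_iterate_div ht.le x')).norm
    (hgrowth.mul_const _) ?_
  filter_upwards [(tendsto_stepFilter_div ht).eventually (eventually_stepFilter t ω)] with
    n ⟨hn, hnω, _⟩
  exact hA.norm_setResolvent_iterate_sub_le hn (by linarith [le_abs_self (t / n * ω)]) n x x'

theorem clSemigroup_add {t s : ℝ} (ht : 0 ≤ t) (hs : 0 ≤ s) (x : X) :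
    clSemigroup A t (clSemigroup A s x) = clSemigroup A (t + s) x := by
  set J : ℕ → X → X := fun n => setResolvent A (n : ℝ)⁻¹
  have hT := tendsto_stepFilter_floor ht
  have hS := tendsto_stepFilter_floor hs
  have hTS : Tendsto (fun n : ℕ => ((n : ℝ)⁻¹, ⌊t * n⌋₊ + ⌊s * n⌋₊)) atTop
      (stepFilter (t + s)) := by
    refine tendsto_stepFilter_iff.2 ⟨(tendsto_stepFilter_iff.1 hT).1,
      ((tendsto_stepFilter_iff.1 hT).2.add (tendsto_stepFilter_iff.1 hS).2).congr fun n => ?_⟩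
    simp only [stepTime]
    push_cast
    ring
  -- `J n ^ ⌊t n⌋` is uniformly Lipschitz, so it carries `J n ^ ⌊s n⌋ x → T(s) x` along
  have hclose : Tendsto (fun n : ℕ =>
      dist ((J n)^[⌊t * n⌋₊] (clSemigroup A s x)) ((J n)^[⌊t * n⌋₊] ((J n)^[⌊s * n⌋₊] x)))
      atTop (𝓝 0) := by
    have := (((hA.tendsto_clSemigroup hs x).comp hS).dist
      (tendsto_const_nhds (x := clSemigroup A s x))).const_mul (Real.exp (2 * |ω| * (t + 1)))
    rw [dist_self, mul_zero] at this
    refine squeeze_zero' (Eventually.of_forall fun _ => dist_nonneg) ?_ this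
    filter_upwards [hT.eventually (hA.eventually_lipschitz_setResolvent_iterate t)] with n hn
    rw [dist_comm _ (clSemigroup A s x)]
    exact hn _ _
  refine tendsto_nhds_unique (((hA.tendsto_clSemigroup ht _).comp hT).congr_dist hclose) ?_
  simpa only [Function.comp_def, Function.iterate_add_apply] using
    (hA.tendsto_clSemigroup (add_nonneg ht hs) x).comp hTS

theorem continuousOn_clSemigroup (x : X) :
    ContinuousOn (fun t => clSemigroup A t x) (Ici 0) := by
  intro t₀ ht₀
  have hlip : ∀ t, 0 ≤ t → t ≤ t₀ + 1 → ∀ w w' : X,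
      dist (clSemigroup A t w) (clSemigroup A t w') ≤ Real.exp (|ω| * (t₀ + 1)) * dist w w' := by
    intro t ht htt w w'
    rw [dist_eq_norm, dist_eq_norm]
    refine (hA.norm_clSemigroup_sub_le ht w w').trans
      (mul_le_mul_of_nonneg_right (Real.exp_le_exp.2 ?_) (norm_nonneg _))
    calc ω * t ≤ |ω| * t := by gcongr; exact le_abs_self ω
      _ ≤ |ω| * (t₀ + 1) := by gcongr
  rw [ContinuousWithinAt, tendsto_iff_dist_tendsto_zero]
  refine tendsto_dist_of_dense (F := fun t => clSemigroup A t) (G := fun _ => clSemigroup A t₀)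
    hA.dense_domain ?_ (Eventually.of_forall fun _ => hlip t₀ ht₀ (by linarith)) ?_ x
  · filter_upwards [self_mem_nhdsWithin, nhdsWithin_le_nhds (gt_mem_nhds (lt_add_one t₀))] with
      t ht htt
    exact hlip t ht htt.le
  rintro z ⟨y, hzy⟩
  have hbound : Tendsto (fun t => Real.exp (2 * |ω| * (t + t₀)) * |t - t₀| * ‖y‖) (𝓝[Ici 0] t₀)
      (𝓝 (Real.exp (2 * |ω| * (t₀ + t₀)) * |t₀ - t₀| * ‖y‖)) :=
    ((by fun_prop : Continuous fun t => Real.exp (2 * |ω| * (t + t₀)) * |t - t₀| * ‖y‖).tendsto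
      t₀).mono_left nhdsWithin_le_nhds
  rw [sub_self, abs_zero, mul_zero, zero_mul] at hbound
  refine squeeze_zero' (Eventually.of_forall fun _ => dist_nonneg) ?_ hbound
  filter_upwards [self_mem_nhdsWithin] with t ht
  exact hA.dist_clSemigroup_le hzy ht ht₀

end IsMDissipativeSet

end

/-- Crandall–Liggett theorem: an `ω`-m-dissipative operator on a Banach space generates a
strongly continuous semigroup of type `ω` via the exponential formula
`T(t)x = lim (I - (t/n) A)⁻ⁿ x`. -/
theorem crandall_liggett
    {X : Type*} [NormedAddCommGroup X] [NormedSpace ℝ X] [CompleteSpace X]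
    (ω : ℝ) (A : Set (X × X)) (hA : IsMDissipativeSet (opShift A ω)) :
    ∃ T : ℝ → X → X,
      (∀ x, T 0 x = x) ∧
      (∀ t, 0 ≤ t → ∀ s, 0 ≤ s → ∀ x, T t (T s x) = T (t + s) x) ∧
      (∀ t, 0 ≤ t → ∀ x y : X, ‖T t x - T t y‖ ≤ Real.exp (ω * t) * ‖x - y‖) ∧
      (∀ x, ContinuousOn (fun t => T t x) (Set.Ici (0:ℝ))) ∧
      (∀ t, 0 ≤ t → ∀ x : X, ∀ J : ℕ → X → X,
        (∀ n : ℕ, 0 < n → t * ω / n < 1 →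
          ∀ y, ∃ z, (J n y, z) ∈ A ∧ J n y - (t / n) • z = y) →
        Tendsto (fun n : ℕ => (J n)^[n] x) atTop (nhds (T t x))) := by
  refine ⟨clSemigroup A, hA.clSemigroup_zero, fun t ht s hs x => hA.clSemigroup_add ht hs x,
    fun t ht => hA.norm_clSemigroup_sub_le ht, hA.continuousOn_clSemigroup, ?_⟩
  intro t ht x J hJ
  refine (hA.tendsto_setResolvent_iterate_div ht x).congr' ?_
  filter_upwards [eventually_gt_atTop 0,
    (tendsto_const_div_atTop_nhds_zero_nat (t * ω)).eventually (gt_mem_nhds one_pos)] with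
    n hn hnω
  have hJn : setResolvent A (t / n) = J n := funext fun w => by
    obtain ⟨z, hz, hzw⟩ := hJ n hn hnω w
    have := hA.1.setResolvent_sub_smul (α := t / n) (by positivity)
      (by rwa [div_mul_eq_mul_div]) hz
    rwa [hzw] at this
  rw [hJn]
end

section
/- Lipschitz continuity of history segments: In the linear delay framework below, there exists a constant M ≥ 1, depending only on the semigroup 𝒯, with the following property: for every (x,f) ∈ D(𝒢) such that f : [-1,0] → H is Lipschitz continuous with constant L, and every t ∈ [0,1], the history segment u_t = 𝒫₂𝒯(t)(x,f) is Lipschitz continuous on [-1,0] with constant max{L, M(‖(x,f)‖_ℰ + ‖𝒢(x,f)‖_ℰ)}. -/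
/-
Since `(q, r)` lies in the graph of the generator of `𝒯`, the orbit `s ↦ 𝒯(s) q` has right
derivative `𝒯(s) r`, so on `[0,1]` it is Lipschitz with constant `M ‖r‖`, where `M` bounds
`‖𝒯(s)‖` for `s ∈ [0,1]` (uniform boundedness). For `t + σ > 0` the history segment is the first
coordinate of this orbit at time `t + σ`, and for `t + σ ≤ 0` it is the `L`-Lipschitz initial
history `F`; the two pieces agree at `0` because `F 0 = q.1`, so the glued function is
Lipschitz with the larger of the two constants.
-/

open MeasureTheory Filter Set

noncomputable section

/-- Lebesgue measure on `[-1,0]`. -/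
def lam : Measure ℝ := volume.restrict (Set.Icc (-1) 0)

/-- Graph of the generator of a strongly continuous semigroup. -/
def genGraph {E : Type*} [NormedAddCommGroup E] [NormedSpace ℝ E]
    (T : ℝ → E →L[ℝ] E) : Set (E × E) :=
  {q | Tendsto (fun t : ℝ => t⁻¹ • (T t q.1 - q.1)) (nhdsWithin 0 (Set.Ioi 0)) (nhds q.2)}

/-- A strongly continuous semigroup of bounded linear operators. -/
def IsC0Semigroup {E : Type*} [NormedAddCommGroup E] [NormedSpace ℝ E]
    (T : ℝ → E →L[ℝ] E) : Prop :=
  T 0 = 1 ∧ (∀ s, 0 ≤ s → ∀ t, 0 ≤ t → T (s + t) = (T s).comp (T t)) ∧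
    ∀ x, ContinuousOn (fun t => T t x) (Set.Ici (0:ℝ))

/-- A strongly continuous contraction semigroup. -/
def IsC0Contraction {E : Type*} [NormedAddCommGroup E] [NormedSpace ℝ E]
    (T : ℝ → E →L[ℝ] E) : Prop :=
  IsC0Semigroup T ∧ ∀ t, 0 ≤ t → ∀ x, ‖T t x‖ ≤ ‖x‖

variable {H : Type*} [NormedAddCommGroup H] [InnerProductSpace ℝ H] [CompleteSpace H]

/-- `F` is an absolutely continuous function on `[-1,0]` with derivative `F'` of class
`L^p`; this encodes membership of (the class of) `F` in `W^{1,p}([-1,0];H)`. -/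
def IsW1pRep (p : ℝ) (F F' : ℝ → H) : Prop :=
  MemLp F' (ENNReal.ofReal p) lam ∧
    ∀ σ ∈ Set.Icc (-1:ℝ) 0, F σ = F (-1) + ∫ s in Set.Icc (-1:ℝ) σ, F' s

/-- The state space `ℰ = H × L^p([-1,0];H)` of the delay equation. -/
abbrev DelayE (H : Type*) [NormedAddCommGroup H] (p : ℝ) :=
  H × Lp H (ENNReal.ofReal p) lam

/-- The delay operator `Φ F = ∫ k(σ) F(σ) dμ(σ)` (Riemann–Stieltjes operator in
total-variation-measure form). -/
def Phi (μ : Measure ℝ) (k : ℝ → H →L[ℝ] H) (F : ℝ → H) : H := ∫ σ, k σ (F σ) ∂μ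

/-- The `p`-product norm `‖(x,f)‖_ℰ = (‖x‖^p + ‖f‖_{L^p}^p)^{1/p}` on `ℰ`. -/
def Enorm (p : ℝ) (q : DelayE H p) : ℝ := (‖q.1‖ ^ p + ‖q.2‖ ^ p) ^ (1 / p)

/-- The graph of the delay operator matrix `𝒢(x,f) = (Bx + Φf, f')` with domain
`{(x,f) : x ∈ D(B), f ∈ W^{1,p}([-1,0];H), f(0) = x}`, where `B` is the generator
of the semigroup `V`. -/
def delayGraph (p : ℝ) (V : ℝ → H →L[ℝ] H) (μ : Measure ℝ) (k : ℝ → H →L[ℝ] H) :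
    Set (DelayE H p × DelayE H p) :=
  {q | ∃ F F' : ℝ → H,
    (∀ᵐ σ ∂lam, q.1.2 σ = F σ) ∧ (∀ᵐ σ ∂lam, q.2.2 σ = F' σ) ∧
    IsW1pRep p F F' ∧ F 0 = q.1.1 ∧
    (q.1.1, q.2.1 - Phi μ k F) ∈ genGraph V}

/-- The graph of the operator `𝒜₂(x,f) = (Φf, f')` with domain
`{(x,f) : f ∈ W^{1,p}([-1,0];H), f(0) = x}`. -/
def shiftGraph (p : ℝ) (μ : Measure ℝ) (k : ℝ → H →L[ℝ] H) :
    Set (DelayE H p × DelayE H p) :=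
  {q | ∃ F F' : ℝ → H,
    (∀ᵐ σ ∂lam, q.1.2 σ = F σ) ∧ (∀ᵐ σ ∂lam, q.2.2 σ = F' σ) ∧
    IsW1pRep p F F' ∧ F 0 = q.1.1 ∧ q.2.1 = Phi μ k F}

/-- The pointwise history segment `u_t` of the orbit of `(x,f) = q` under `T`:
`u_t(σ) = u(t+σ)` if `t+σ > 0` and `u_t(σ) = f(t+σ)` otherwise, where
`u(s) = 𝒫₁ T(s) q` and `F` is the chosen representative of `f`. -/
def histFun (p : ℝ) [Fact (1 ≤ ENNReal.ofReal p)]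
    (T : ℝ → DelayE H p →L[ℝ] DelayE H p) (q : DelayE H p) (F : ℝ → H)
    (t σ : ℝ) : H :=
  if 0 < t + σ then (T (t + σ) q).1 else F (t + σ)

/-- The semigroup `T` on `ℰ` satisfies the history (translation) formula. -/
def HistoryFormula (p : ℝ) [Fact (1 ≤ ENNReal.ofReal p)]
    (T : ℝ → DelayE H p →L[ℝ] DelayE H p) : Prop :=
  ∀ q : DelayE H p, ∀ t, 0 ≤ t → ∀ F : ℝ → H, (∀ᵐ σ ∂lam, q.2 σ = F σ) →
    ∀ᵐ σ ∂lam, (T t q).2 σ = histFun p T q F t σ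

/-- The smallest Lipschitz constant of `F` on `[-1,0]`. -/
def lipConst (F : ℝ → H) : ℝ :=
  sInf {L | 0 ≤ L ∧ ∀ σ₁ ∈ Set.Icc (-1:ℝ) 0, ∀ σ₂ ∈ Set.Icc (-1:ℝ) 0,
    ‖F σ₁ - F σ₂‖ ≤ L * |σ₁ - σ₂|}

/-- The Lipschitz norm `‖f‖_{Lip(H)} = sup_σ ‖F(σ)‖ + Lip(F)`. -/
def LipNormH (F : ℝ → H) : ℝ := (⨆ σ : Set.Icc (-1:ℝ) 0, ‖F (σ : ℝ)‖) + lipConst F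

/-- The `L^p([-1,0];H)` norm of a representative. -/
def LpNormOn (p : ℝ) (F : ℝ → H) : ℝ :=
  (∫ σ in Set.Icc (-1:ℝ) 0, ‖F σ‖ ^ p) ^ (1 / p)

/-- The `W^{1,p}([-1,0];H)` norm `‖f‖ = ‖f‖_{L^p} + ‖f'‖_{L^p}`. -/
def W1pNormH (p : ℝ) (F F' : ℝ → H) : ℝ := LpNormOn p F + LpNormOn p F'

/-- The `L^p([-1,0];D(B))` norm of a representative, computed through the graph norm
of `B` (the function `BF` records the pointwise values `B(F(σ))`). -/
def LpNormB (p : ℝ) (F BF : ℝ → H) : ℝ :=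
  (∫ σ in Set.Icc (-1:ℝ) 0, (‖F σ‖ + ‖BF σ‖) ^ p) ^ (1 / p)

/-- The `W^{1,p}([-1,0];D(B))` norm. -/
def W1pNormB (p : ℝ) (F F' BF BF' : ℝ → H) : ℝ := LpNormB p F BF + LpNormB p F' BF'

/-- Membership of `(x,f) = q` in the regularity class
`𝒟 = {(x,f) : x ∈ D(B²), f ∈ W^{1,p}([-1,0];D(B)), f Lipschitz into H, f(0) = x}`,
witnessed by a representative `F` of `f`, a representative `F'` of its derivative,
the pointwise values `BF = B∘F`, `BF' = B∘F'` and the vectors `Bx = Bx`, `B2x = B²x`,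
where `B` is the generator of `V`. -/
def DMem (p : ℝ) (V : ℝ → H →L[ℝ] H) (q : DelayE H p) (F F' BF BF' : ℝ → H)
    (Bx B2x : H) : Prop :=
  (∀ᵐ σ ∂lam, q.2 σ = F σ) ∧
  IsW1pRep p F F' ∧
  F 0 = q.1 ∧
  (q.1, Bx) ∈ genGraph V ∧ (Bx, B2x) ∈ genGraph V ∧
  (∀ σ ∈ Set.Icc (-1:ℝ) 0, (F σ, BF σ) ∈ genGraph V) ∧
  (∀ σ ∈ Set.Icc (-1:ℝ) 0, (F' σ, BF' σ) ∈ genGraph V) ∧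
  (∀ σ ∈ Set.Icc (-1:ℝ) 0, BF σ = BF (-1) + ∫ s in Set.Icc (-1:ℝ) σ, BF' s) ∧
  MemLp BF' (ENNReal.ofReal p) lam ∧
  (∃ L, 0 ≤ L ∧ ∀ σ₁ ∈ Set.Icc (-1:ℝ) 0, ∀ σ₂ ∈ Set.Icc (-1:ℝ) 0,
    ‖F σ₁ - F σ₂‖ ≤ L * |σ₁ - σ₂|)

/-- The norm `‖(x,f)‖_𝒟 = ‖x‖_B + ‖Bx‖_B + ‖f‖_{W^{1,p}(D(B))} + ‖f‖_{Lip(H)}`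
computed from the witnesses. -/
def DNorm (p : ℝ) (q : DelayE H p) (F F' BF BF' : ℝ → H) (Bx B2x : H) : ℝ :=
  (‖q.1‖ + ‖Bx‖) + (‖Bx‖ + ‖B2x‖) + W1pNormB p F F' BF BF' + LipNormH F

open Topology

namespace IsC0Semigroup

variable {E : Type*} [NormedAddCommGroup E] [NormedSpace ℝ E] {T : ℝ → E →L[ℝ] E}

theorem apply_add (hT : IsC0Semigroup T) {s t : ℝ} (hs : 0 ≤ s) (ht : 0 ≤ t) (x : E) :
    T (s + t) x = T s (T t x) := by
  rw [hT.2.1 s hs t ht, ContinuousLinearMap.comp_apply]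

theorem exists_one_le_norm_le [CompleteSpace E] (hT : IsC0Semigroup T) (τ : ℝ) :
    ∃ M, 1 ≤ M ∧ ∀ t ∈ Icc 0 τ, ‖T t‖ ≤ M := by
  obtain ⟨M, hM⟩ : ∃ M, ∀ i : Icc 0 τ, ‖T i‖ ≤ M := by
    refine banach_steinhaus fun x => ?_
    obtain ⟨C, hC⟩ := isCompact_Icc.exists_bound_of_continuousOn
      ((hT.2.2 x).mono fun t ht => ht.1)
    exact ⟨C, fun i => hC i i.2⟩
  exact ⟨max 1 M, le_max_left _ _, fun t ht => (hM ⟨t, ht⟩).trans (le_max_right _ _)⟩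

theorem hasDerivWithinAt_of_mem_genGraph (hT : IsC0Semigroup T) {x y : E}
    (hxy : (x, y) ∈ genGraph T) {s : ℝ} (hs : 0 ≤ s) :
    HasDerivWithinAt (fun t => T t x) (T s y) (Ici s) s := by
  rw [hasDerivWithinAt_iff_tendsto_slope, Ici_sdiff_left]
  have hshift : Tendsto (fun t => t - s) (𝓝[>] s) (𝓝[>] 0) :=
    tendsto_nhdsWithin_of_tendsto_nhds_of_eventually_within _
      (by simpa using ((continuous_sub_right s).tendsto s).mono_left nhdsWithin_le_nhds)
      (eventually_nhdsWithin_of_forall fun _ ht => mem_Ioi.2 (sub_pos.2 ht))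
  refine (((T s).continuous.tendsto y).comp (hxy.comp hshift)).congr' ?_
  filter_upwards [self_mem_nhdsWithin] with t ht
  have hsplit : T t x = T s (T (t - s) x) := by
    simpa using hT.apply_add hs (sub_pos.2 ht).le x
  simp [slope_def_module, hsplit]

theorem norm_sub_le_of_mem_genGraph (hT : IsC0Semigroup T) {x y : E}
    (hxy : (x, y) ∈ genGraph T) {a b M : ℝ} (ha : 0 ≤ a) (hab : a ≤ b)
    (hM : ∀ t ∈ Icc a b, ‖T t‖ ≤ M) :
    ‖T b x - T a x‖ ≤ M * ‖y‖ * (b - a) :=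
  norm_image_sub_le_of_norm_deriv_right_le_segment
    ((hT.2.2 x).mono fun _ ht => ha.trans ht.1)
    (fun _ ht => hT.hasDerivWithinAt_of_mem_genGraph hxy (ha.trans ht.1))
    (fun t ht => ((T t).le_opNorm y).trans
      (mul_le_mul_of_nonneg_right (hM t (Ico_subset_Icc_self ht)) (norm_nonneg y)))
    b ⟨hab, le_rfl⟩

end IsC0Semigroup

theorem le_rpow_add_rpow_rpow_one_div {a b p : ℝ} (ha : 0 ≤ a) (hb : 0 ≤ b) (hp : 0 < p) :
    a ≤ (a ^ p + b ^ p) ^ (1 / p) :=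
  calc a = (a ^ p) ^ (1 / p) := by rw [one_div, Real.rpow_rpow_inv ha hp.ne']
    _ ≤ (a ^ p + b ^ p) ^ (1 / p) := by gcongr; exact le_add_of_nonneg_right (by positivity)

section DelayE

variable {X : Type*} [NormedAddCommGroup X] {p : ℝ} [Fact (1 ≤ ENNReal.ofReal p)]

theorem Enorm_nonneg (w : DelayE X p) : 0 ≤ Enorm p w := by
  unfold Enorm; positivity

theorem norm_le_Enorm (hp : 0 < p) (w : DelayE X p) : ‖w‖ ≤ Enorm p w := by
  refine max_le (le_rpow_add_rpow_rpow_one_div (norm_nonneg _) (norm_nonneg _) hp) ?_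
  rw [Enorm, add_comm]
  exact le_rpow_add_rpow_rpow_one_div (norm_nonneg _) (norm_nonneg _) hp

end DelayE

section Glue

variable {E : Type*} [NormedAddCommGroup E] {u F : ℝ → E} {L C : ℝ}

theorem norm_ite_sub_ite_le_of_le
    (hu : ∀ a b, 0 ≤ a → a ≤ b → b ≤ 1 → ‖u b - u a‖ ≤ C * (b - a))
    (hF : ∀ a ∈ Icc (-1:ℝ) 0, ∀ b ∈ Icc (-1:ℝ) 0, ‖F a - F b‖ ≤ L * |a - b|)
    (h0 : F 0 = u 0) {s₁ s₂ : ℝ} (hs₁ : -1 ≤ s₁) (hs₂ : s₂ ≤ 1) (h12 : s₁ ≤ s₂) :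
    ‖(if 0 < s₁ then u s₁ else F s₁) - (if 0 < s₂ then u s₂ else F s₂)‖ ≤
      max L C * (s₂ - s₁) := by
  have hL := le_max_left L C
  have hC := le_max_right L C
  by_cases h₂ : 0 < s₂
  · by_cases h₁ : 0 < s₁
    · rw [if_pos h₁, if_pos h₂, norm_sub_rev]
      exact (hu _ _ h₁.le h12 hs₂).trans (by gcongr)
    · push Not at h₁
      rw [if_neg h₁.not_gt, if_pos h₂]
      have hFs : ‖F s₁ - F 0‖ ≤ L * (0 - s₁) := by
        simpa [abs_of_nonpos h₁] using hF s₁ ⟨hs₁, h₁⟩ 0 (by norm_num)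
      have hus : ‖u 0 - u s₂‖ ≤ C * (s₂ - 0) := by
        rw [norm_sub_rev]; exact hu 0 s₂ le_rfl h₂.le hs₂
      calc ‖F s₁ - u s₂‖ ≤ ‖F s₁ - F 0‖ + ‖u 0 - u s₂‖ := by
            rw [← h0]; exact norm_sub_le_norm_sub_add_norm_sub _ _ _
        _ ≤ max L C * (0 - s₁) + max L C * (s₂ - 0) := by
            gcongr
            · exact hFs.trans (by gcongr)
            · exact hus.trans (by gcongr)
        _ = max L C * (s₂ - s₁) := by ring
  · push Not at h₂
    rw [if_neg (h12.trans h₂).not_gt, if_neg h₂.not_gt]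
    refine (hF s₁ ⟨hs₁, h12.trans h₂⟩ s₂ ⟨hs₁.trans h12, h₂⟩).trans ?_
    rw [abs_sub_comm, abs_of_nonneg (sub_nonneg.2 h12)]
    gcongr

theorem norm_ite_sub_ite_le
    (hu : ∀ a b, 0 ≤ a → a ≤ b → b ≤ 1 → ‖u b - u a‖ ≤ C * (b - a))
    (hF : ∀ a ∈ Icc (-1:ℝ) 0, ∀ b ∈ Icc (-1:ℝ) 0, ‖F a - F b‖ ≤ L * |a - b|)
    (h0 : F 0 = u 0) {s₁ s₂ : ℝ} (hs₁ : s₁ ∈ Icc (-1:ℝ) 1) (hs₂ : s₂ ∈ Icc (-1:ℝ) 1) :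
    ‖(if 0 < s₁ then u s₁ else F s₁) - (if 0 < s₂ then u s₂ else F s₂)‖ ≤
      max L C * |s₁ - s₂| := by
  rcases le_total s₁ s₂ with h | h
  · rw [abs_sub_comm, abs_of_nonneg (sub_nonneg.2 h)]
    exact norm_ite_sub_ite_le_of_le hu hF h0 hs₁.1 hs₂.2 h
  · rw [norm_sub_rev, abs_of_nonneg (sub_nonneg.2 h)]
    exact norm_ite_sub_ite_le_of_le hu hF h0 hs₂.1 hs₁.2 h

end Glue

theorem history_segments_lipschitz_general
    {H : Type*} [NormedAddCommGroup H] [InnerProductSpace ℝ H] [CompleteSpace H]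
    (p : ℝ) (hp : 1 < p) [Fact (1 ≤ ENNReal.ofReal p)]
    (V : ℝ → H →L[ℝ] H)
    (μ : Measure ℝ)
    (k : ℝ → H →L[ℝ] H)
    (𝒯 : ℝ → DelayE H p →L[ℝ] DelayE H p)
    (h𝒯sg : IsC0Semigroup 𝒯)
    (hgen𝒯 : genGraph 𝒯 = delayGraph p V μ k) :
    ∃ M : ℝ, 1 ≤ M ∧
      ∀ q r : DelayE H p, (q, r) ∈ delayGraph p V μ k →
      ∀ F F' : ℝ → H, (∀ᵐ σ ∂lam, q.2 σ = F σ) → IsW1pRep p F F' → F 0 = q.1 →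
      ∀ L : ℝ, 0 ≤ L →
      (∀ σ₁ ∈ Set.Icc (-1:ℝ) 0, ∀ σ₂ ∈ Set.Icc (-1:ℝ) 0,
        ‖F σ₁ - F σ₂‖ ≤ L * |σ₁ - σ₂|) →
      ∀ t ∈ Set.Icc (0:ℝ) 1, ∀ σ₁ ∈ Set.Icc (-1:ℝ) 0, ∀ σ₂ ∈ Set.Icc (-1:ℝ) 0,
        ‖histFun p 𝒯 q F t σ₁ - histFun p 𝒯 q F t σ₂‖ ≤
          max L (M * (Enorm p q + Enorm p r)) * |σ₁ - σ₂| := by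
  obtain ⟨M, hM1, hM⟩ := h𝒯sg.exists_one_le_norm_le 1
  refine ⟨M, hM1, fun q r hqr F _ _ _ hF0 L _ hLip t ht σ₁ hσ₁ σ₂ hσ₂ => ?_⟩
  have hr : ‖r‖ ≤ Enorm p q + Enorm p r :=
    (norm_le_Enorm (by linarith) r).trans (le_add_of_nonneg_left (Enorm_nonneg q))
  have horbit : ∀ a b, 0 ≤ a → a ≤ b → b ≤ 1 →
      ‖(𝒯 b q).1 - (𝒯 a q).1‖ ≤ M * (Enorm p q + Enorm p r) * (b - a) := by
    intro a b ha hab hb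
    calc ‖(𝒯 b q).1 - (𝒯 a q).1‖ ≤ ‖𝒯 b q - 𝒯 a q‖ := norm_fst_le (𝒯 b q - 𝒯 a q)
      _ ≤ M * ‖r‖ * (b - a) := h𝒯sg.norm_sub_le_of_mem_genGraph (hgen𝒯 ▸ hqr) ha hab
          fun s hs => hM s ⟨ha.trans hs.1, hs.2.trans hb⟩
      _ ≤ M * (Enorm p q + Enorm p r) * (b - a) := by gcongr
  have h0 : F 0 = (𝒯 0 q).1 := by rw [h𝒯sg.1, hF0]; rfl
  have hglue := norm_ite_sub_ite_le horbit hLip h0 (s₁ := t + σ₁) (s₂ := t + σ₂)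
    ⟨by linarith [ht.1, hσ₁.1], by linarith [ht.2, hσ₁.2]⟩
    ⟨by linarith [ht.1, hσ₂.1], by linarith [ht.2, hσ₂.2]⟩
  simpa [histFun] using hglue

/-- Lipschitz continuity of history segments along the delay semigroup. -/
theorem history_segments_lipschitz
    {H : Type*} [NormedAddCommGroup H] [InnerProductSpace ℝ H] [CompleteSpace H]
    (p : ℝ) (hp : 1 < p) [Fact (1 ≤ ENNReal.ofReal p)]
    (V : ℝ → H →L[ℝ] H) (hV : IsC0Contraction V)
    (hVdense : Dense {x : H | ∃ y, (x, y) ∈ genGraph V})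
    (μ : Measure ℝ) [IsFiniteMeasure μ]
    (hμsupp : μ (Set.Icc (-1:ℝ) 0)ᶜ = 0) (hμatom : 0 < μ {(-1:ℝ)})
    (k : ℝ → H →L[ℝ] H)
    (hkmeas : ∀ x : H, MeasureTheory.StronglyMeasurable fun σ => k σ x)
    (hknorm : ∀ σ, ‖k σ‖ ≤ 1)
    (𝒯 : ℝ → DelayE H p →L[ℝ] DelayE H p)
    (h𝒯sg : IsC0Semigroup 𝒯)
    (hgen𝒯 : genGraph 𝒯 = delayGraph p V μ k)
    (hhist : HistoryFormula p 𝒯) :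
    ∃ M : ℝ, 1 ≤ M ∧
      ∀ q r : DelayE H p, (q, r) ∈ delayGraph p V μ k →
      ∀ F F' : ℝ → H, (∀ᵐ σ ∂lam, q.2 σ = F σ) → IsW1pRep p F F' → F 0 = q.1 →
      ∀ L : ℝ, 0 ≤ L →
      (∀ σ₁ ∈ Set.Icc (-1:ℝ) 0, ∀ σ₂ ∈ Set.Icc (-1:ℝ) 0,
        ‖F σ₁ - F σ₂‖ ≤ L * |σ₁ - σ₂|) →
      ∀ t ∈ Set.Icc (0:ℝ) 1, ∀ σ₁ ∈ Set.Icc (-1:ℝ) 0, ∀ σ₂ ∈ Set.Icc (-1:ℝ) 0,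
        ‖histFun p 𝒯 q F t σ₁ - histFun p 𝒯 q F t σ₂‖ ≤
          max L (M * (Enorm p q + Enorm p r)) * |σ₁ - σ₂| :=
  history_segments_lipschitz_general p hp V μ k 𝒯 h𝒯sg hgen𝒯

end
end

section
/- Comparison of the delay terms of the split and the unsplit solution: In the linear delay framework below, assume additionally that there exist σ₀ ∈ (-1,0) and κ > 0 such that the restriction of μ to [σ₀,0] is absolutely continuous with respect to Lebesgue measure with density bounded by κ. Then there is a constant C > 0, independent of the initial data, such that for every (x,f) ∈ D(𝒢) and every t ∈ [0,−σ₀]: ‖Φu_t − Φv_t‖_H ≤ C t · max{‖f‖_{L^p([-1,0];H)}, ‖x‖_H}, where (u(t),u_t) := 𝒯(t)(x,f) and (v(t),v_t) := 𝒯₂(t)(x,f). -/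
/-!
The two histories agree for `σ ≤ -t`, where both equal the initial function, so `Φu_t - Φv_t`
only involves `μ` on `(-t, 0] ⊆ [σ₀, 0]`. There `μ` has mass at most `κ t`, while by uniform
boundedness the two semigroups have norms at most some `M₁`, `M₂` on `[0, -σ₀]`, so the
integrand is bounded by `(M₁ + M₂) ‖(x,f)‖`.
-/

open MeasureTheory Filter Set

noncomputable section

variable {H : Type*} [NormedAddCommGroup H] [InnerProductSpace ℝ H] [CompleteSpace H]

section Measurability

variable {α 𝕜 E F : Type*} [MeasurableSpace α] [NontriviallyNormedField 𝕜]
  [NormedAddCommGroup E] [NormedSpace 𝕜 E] [NormedAddCommGroup F] [NormedSpace 𝕜 F]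
  {k : α → E →L[𝕜] F}

theorem MeasureTheory.SimpleFunc.stronglyMeasurable_clm_apply
    (hk : ∀ x, StronglyMeasurable fun a => k a x) (f : SimpleFunc α E) :
    StronglyMeasurable fun a => k a (f a) := by
  induction f using SimpleFunc.induction with
  | @const c s hs =>
    have hind : (fun a => k a ((SimpleFunc.piecewise s hs (SimpleFunc.const α c)
        (SimpleFunc.const α 0)) a)) = s.indicator fun a => k a c := by
      funext a
      by_cases ha : a ∈ s <;> simp [SimpleFunc.piecewise_apply, Set.indicator, ha]
    rw [hind]
    exact (hk c).indicator hs
  | @add f g _ hf hg =>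
    have hsum : (fun a => k a ((f + g) a)) = (fun a => k a (f a)) + fun a => k a (g a) :=
      funext fun a => (k a).map_add (f a) (g a)
    rw [hsum]
    exact hf.add hg

theorem MeasureTheory.StronglyMeasurable.clm_apply_of_pointwise
    (hk : ∀ x, StronglyMeasurable fun a => k a x) {g : α → E} (hg : StronglyMeasurable g) :
    StronglyMeasurable fun a => k a (g a) :=
  stronglyMeasurable_of_tendsto atTop (fun _ => SimpleFunc.stronglyMeasurable_clm_apply hk _)
    (tendsto_pi_nhds.2 fun a => ((k a).continuous.tendsto (g a)).comp (hg.tendsto_approx a))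

end Measurability

theorem exists_pos_forall_opNorm_le_of_continuousOn {X 𝕜 E F : Type*} [TopologicalSpace X]
    [NontriviallyNormedField 𝕜] [NormedAddCommGroup E] [NormedSpace 𝕜 E] [CompleteSpace E]
    [NormedAddCommGroup F] [NormedSpace 𝕜 F] {K : Set X} (hK : IsCompact K)
    {T : X → E →L[𝕜] F} (hT : ∀ x, ContinuousOn (fun s => T s x) K) :
    ∃ M, 0 < M ∧ ∀ s ∈ K, ‖T s‖ ≤ M := by
  obtain ⟨M, hM⟩ := banach_steinhaus (g := fun s : K => T s) fun x => by
    obtain ⟨C, hC⟩ := hK.exists_bound_of_continuousOn (hT x)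
    exact ⟨C, fun s => hC s s.2⟩
  exact ⟨max M 1, by positivity, fun s hs => (hM ⟨s, hs⟩).trans (le_max_left _ _)⟩

theorem IsC0Semigroup.continuous_apply_max_zero {E : Type*} [NormedAddCommGroup E]
    [NormedSpace ℝ E] {T : ℝ → E →L[ℝ] E} (hT : IsC0Semigroup T) (x : E) :
    Continuous fun s => T (max s 0) x :=
  (hT.2.2 x).comp_continuous (continuous_id.max continuous_const) fun _ =>
    mem_Ici.2 (le_max_right _ _)

theorem IsC0Semigroup.exists_pos_forall_opNorm_le {E : Type*} [NormedAddCommGroup E]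
    [NormedSpace ℝ E] [CompleteSpace E] {T : ℝ → E →L[ℝ] E} (hT : IsC0Semigroup T) (a : ℝ) :
    ∃ M, 0 < M ∧ ∀ s ∈ Icc 0 a, ‖T s‖ ≤ M :=
  exists_pos_forall_opNorm_le_of_continuousOn isCompact_Icc fun x =>
    (hT.2.2 x).mono Icc_subset_Ici_self

theorem norm_integral_sub_le_of_norm_sub_le_indicator {α E : Type*} [MeasurableSpace α]
    [NormedAddCommGroup E] [NormedSpace ℝ E] {μ : Measure α} {f g : α → E}
    (hfg : AEStronglyMeasurable (fun a => f a - g a) μ) {S : Set α} (hS : MeasurableSet S)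
    (hμS : μ S ≠ ⊤) {c : ℝ} (hc : 0 ≤ c)
    (hbound : ∀ᵐ a ∂μ, ‖f a - g a‖ ≤ S.indicator (fun _ => c) a) :
    ‖∫ a, f a ∂μ - ∫ a, g a ∂μ‖ ≤ c * μ.real S := by
  have hind : Integrable (S.indicator fun _ => c) μ :=
    (integrable_indicator_iff hS).2 (integrableOn_const hμS)
  have hint : Integrable (fun a => f a - g a) μ := hind.mono' hfg hbound
  by_cases hf : Integrable f μ
  · have hg : Integrable g μ :=
      (hf.sub hint).congr (ae_of_all _ fun a => sub_sub_cancel (f a) (g a))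
    calc ‖∫ a, f a ∂μ - ∫ a, g a ∂μ‖ = ‖∫ a, f a - g a ∂μ‖ := by rw [integral_sub hf hg]
      _ ≤ ∫ a, S.indicator (fun _ => c) a ∂μ := norm_integral_le_of_norm_le hind hbound
      _ = c * μ.real S := by rw [integral_indicator_const _ hS, smul_eq_mul, mul_comm]
  · -- both integrals take the junk value `0`
    have hg : ¬ Integrable g μ := fun hg =>
      hf ((hg.add hint).congr (ae_of_all _ fun a => add_sub_cancel (g a) (f a)))
    rw [integral_undef hf, integral_undef hg, sub_zero, norm_zero]
    positivity

theorem norm_Phi_sub_le {H : Type*} [NormedAddCommGroup H] [InnerProductSpace ℝ H]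
    {μ : Measure ℝ} {k : ℝ → H →L[ℝ] H}
    (hkmeas : ∀ x, StronglyMeasurable fun σ => k σ x) (hknorm : ∀ σ, ‖k σ‖ ≤ 1) {F G : ℝ → H}
    (hFG : StronglyMeasurable fun σ => F σ - G σ) {S : Set ℝ} (hS : MeasurableSet S)
    (hμS : μ S ≠ ⊤) {c : ℝ} (hc : 0 ≤ c)
    (hbound : ∀ᵐ σ ∂μ, ‖F σ - G σ‖ ≤ S.indicator (fun _ => c) σ) :
    ‖Phi μ k F - Phi μ k G‖ ≤ c * μ.real S := by
  refine norm_integral_sub_le_of_norm_sub_le_indicator ?_ hS hμS hc ?_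
  · simpa only [← map_sub] using (hFG.clm_apply_of_pointwise hkmeas).aestronglyMeasurable
  · filter_upwards [hbound] with σ hσ
    rw [← map_sub]
    exact ((k σ).le_of_opNorm_le (hknorm σ) _).trans (by simpa using hσ)

theorem measure_Ioc_neg_le {μ : Measure ℝ} {σ₀ κ : ℝ} (hκ : 0 ≤ κ)
    (habs : ∀ E : Set ℝ, MeasurableSet E →
      μ (E ∩ Icc σ₀ 0) ≤ ENNReal.ofReal κ * volume (E ∩ Icc σ₀ 0))
    {t : ℝ} (ht : t ≤ -σ₀) :
    μ (Ioc (-t) 0) ≤ ENNReal.ofReal (κ * t) := by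
  have hsub : Ioc (-t) 0 ∩ Icc σ₀ 0 = Ioc (-t) 0 :=
    inter_eq_left.2 fun σ hσ => ⟨by linarith [hσ.1], hσ.2⟩
  simpa [hsub, Real.volume_Ioc, ENNReal.ofReal_mul hκ] using habs (Ioc (-t) 0) measurableSet_Ioc

section History

variable {H : Type*} [NormedAddCommGroup H] [InnerProductSpace ℝ H]
  {p : ℝ} [Fact (1 ≤ ENNReal.ofReal p)] {T T₂ : ℝ → DelayE H p →L[ℝ] DelayE H p}

theorem histFun_sub_histFun (hT : T 0 = 1) (hT₂ : T₂ 0 = 1) (q : DelayE H p) (F : ℝ → H)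
    (t σ : ℝ) : histFun p T q F t σ - histFun p T₂ q F t σ =
      (T (max (t + σ) 0) q).1 - (T₂ (max (t + σ) 0) q).1 := by
  by_cases hσ : 0 < t + σ
  · simp [histFun, hσ, max_eq_left hσ.le]
  · simp [histFun, hσ, max_eq_right (not_lt.1 hσ), hT, hT₂]

theorem continuous_histFun_sub_histFun (hT : IsC0Semigroup T) (hT₂ : IsC0Semigroup T₂)
    (q : DelayE H p) (F : ℝ → H) (t : ℝ) :
    Continuous fun σ => histFun p T q F t σ - histFun p T₂ q F t σ := by
  simp only [histFun_sub_histFun hT.1 hT₂.1]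
  exact ((hT.continuous_apply_max_zero q).fst.sub (hT₂.continuous_apply_max_zero q).fst).comp
    (continuous_const.add continuous_id)

theorem norm_histFun_sub_histFun_le_indicator (hT : T 0 = 1) (hT₂ : T₂ 0 = 1) {a M₁ M₂ : ℝ}
    (hM₁ : ∀ s ∈ Icc 0 a, ‖T s‖ ≤ M₁) (hM₂ : ∀ s ∈ Icc 0 a, ‖T₂ s‖ ≤ M₂) (q : DelayE H p)
    (F : ℝ → H) {t σ : ℝ} (ht0 : 0 ≤ t) (hta : t ≤ a) (hσ : σ ≤ 0) :
    ‖histFun p T q F t σ - histFun p T₂ q F t σ‖ ≤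
      (Ioc (-t) 0).indicator (fun _ => (M₁ + M₂) * ‖q‖) σ := by
  rw [histFun_sub_histFun hT hT₂]
  by_cases htσ : 0 < t + σ
  · have hs : t + σ ∈ Icc 0 a := ⟨htσ.le, by linarith⟩
    rw [indicator_of_mem (show σ ∈ Ioc (-t) 0 from ⟨by linarith, hσ⟩), max_eq_left htσ.le]
    calc ‖(T (t + σ) q).1 - (T₂ (t + σ) q).1‖
        ≤ ‖T (t + σ) q‖ + ‖T₂ (t + σ) q‖ :=
          (norm_sub_le _ _).trans (add_le_add (norm_fst_le _) (norm_fst_le _))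
      _ ≤ M₁ * ‖q‖ + M₂ * ‖q‖ :=
          add_le_add ((T _).le_of_opNorm_le (hM₁ _ hs) q) ((T₂ _).le_of_opNorm_le (hM₂ _ hs) q)
      _ = (M₁ + M₂) * ‖q‖ := by ring
  · have h0 : (0 : ℝ) ∈ Icc 0 a := ⟨le_rfl, ht0.trans hta⟩
    have hM : 0 ≤ M₁ + M₂ :=
      add_nonneg ((norm_nonneg (T 0)).trans (hM₁ 0 h0)) ((norm_nonneg (T₂ 0)).trans (hM₂ 0 h0))
    rw [max_eq_right (not_lt.1 htσ), hT, hT₂, sub_self, norm_zero]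
    exact indicator_nonneg (fun _ _ => by positivity) σ

end History

theorem delay_terms_comparison_general
    {H : Type*} [NormedAddCommGroup H] [InnerProductSpace ℝ H] [CompleteSpace H]
    (p : ℝ) [Fact (1 ≤ ENNReal.ofReal p)]
    (V : ℝ → H →L[ℝ] H)
    (μ : Measure ℝ) [IsFiniteMeasure μ]
    (hμsupp : μ (Set.Icc (-1:ℝ) 0)ᶜ = 0)
    (k : ℝ → H →L[ℝ] H)
    (hkmeas : ∀ x : H, MeasureTheory.StronglyMeasurable fun σ => k σ x)
    (hknorm : ∀ σ, ‖k σ‖ ≤ 1)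
    -- additional regularity: on `[σ₀,0]` the measure `μ` is absolutely continuous
    -- with density bounded by `κ`:
    (σ₀ : ℝ) (κ : ℝ) (hκ : 0 < κ)
    (habs : ∀ E : Set ℝ, MeasurableSet E →
      μ (E ∩ Set.Icc σ₀ 0) ≤ ENNReal.ofReal κ * volume (E ∩ Set.Icc σ₀ 0))
    (𝒯 𝒯₂ : ℝ → DelayE H p →L[ℝ] DelayE H p)
    (h𝒯sg : IsC0Semigroup 𝒯) (h𝒯₂sg : IsC0Semigroup 𝒯₂) :
    ∃ C : ℝ, 0 < C ∧
      ∀ q : DelayE H p, (∃ y, (q.1, y) ∈ genGraph V) →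
      ∀ F F' : ℝ → H, (∀ᵐ σ ∂lam, q.2 σ = F σ) → IsW1pRep p F F' → F 0 = q.1 →
      ∀ t ∈ Set.Icc (0:ℝ) (-σ₀),
        ‖Phi μ k (histFun p 𝒯 q F t) - Phi μ k (histFun p 𝒯₂ q F t)‖ ≤
          C * t * max ‖q.2‖ ‖q.1‖ := by
  obtain ⟨M₁, hM₁, h𝒯M⟩ := h𝒯sg.exists_pos_forall_opNorm_le (-σ₀)
  obtain ⟨M₂, hM₂, h𝒯₂M⟩ := h𝒯₂sg.exists_pos_forall_opNorm_le (-σ₀)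
  refine ⟨(M₁ + M₂) * κ, by positivity, ?_⟩
  rintro q - F F' - - - t ⟨ht0, ht⟩
  have hgap : ∀ᵐ σ ∂μ, ‖histFun p 𝒯 q F t σ - histFun p 𝒯₂ q F t σ‖ ≤
      (Ioc (-t) 0).indicator (fun _ => (M₁ + M₂) * ‖q‖) σ := by
    filter_upwards [mem_ae_iff.2 hμsupp] with σ hσ
    exact norm_histFun_sub_histFun_le_indicator h𝒯sg.1 h𝒯₂sg.1 h𝒯M h𝒯₂M q F ht0 ht hσ.2
  have hmass : μ.real (Ioc (-t) 0) ≤ κ * t :=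
    ENNReal.toReal_le_of_le_ofReal (by positivity) (measure_Ioc_neg_le hκ.le habs ht)
  calc ‖Phi μ k (histFun p 𝒯 q F t) - Phi μ k (histFun p 𝒯₂ q F t)‖
      ≤ (M₁ + M₂) * ‖q‖ * μ.real (Ioc (-t) 0) :=
        norm_Phi_sub_le hkmeas hknorm
          (continuous_histFun_sub_histFun h𝒯sg h𝒯₂sg q F t).stronglyMeasurable
          measurableSet_Ioc (measure_ne_top _ _) (by positivity) hgap
    _ ≤ (M₁ + M₂) * ‖q‖ * (κ * t) := by gcongr
    _ = (M₁ + M₂) * κ * t * max ‖q.2‖ ‖q.1‖ := by rw [Prod.norm_def, max_comm]; ring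

/-- Comparison of the delay terms `Φu_t` and `Φv_t` of the unsplit and the split
solutions. -/
theorem delay_terms_comparison
    {H : Type*} [NormedAddCommGroup H] [InnerProductSpace ℝ H] [CompleteSpace H]
    (p : ℝ) (hp : 1 < p) [Fact (1 ≤ ENNReal.ofReal p)]
    (V : ℝ → H →L[ℝ] H) (hV : IsC0Contraction V)
    (hVdense : Dense {x : H | ∃ y, (x, y) ∈ genGraph V})
    (μ : Measure ℝ) [IsFiniteMeasure μ]
    (hμsupp : μ (Set.Icc (-1:ℝ) 0)ᶜ = 0) (hμatom : 0 < μ {(-1:ℝ)})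
    (k : ℝ → H →L[ℝ] H)
    (hkmeas : ∀ x : H, MeasureTheory.StronglyMeasurable fun σ => k σ x)
    (hknorm : ∀ σ, ‖k σ‖ ≤ 1)
    -- additional regularity: on `[σ₀,0]` the measure `μ` is absolutely continuous
    -- with density bounded by `κ`:
    (σ₀ : ℝ) (hσ₀ : σ₀ ∈ Set.Ioo (-1:ℝ) 0) (κ : ℝ) (hκ : 0 < κ)
    (habs : ∀ E : Set ℝ, MeasurableSet E →
      μ (E ∩ Set.Icc σ₀ 0) ≤ ENNReal.ofReal κ * volume (E ∩ Set.Icc σ₀ 0))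
    (𝒯 𝒯₂ : ℝ → DelayE H p →L[ℝ] DelayE H p)
    (h𝒯sg : IsC0Semigroup 𝒯) (h𝒯₂sg : IsC0Semigroup 𝒯₂)
    (hgen𝒯 : genGraph 𝒯 = delayGraph p V μ k)
    (hgen𝒯₂ : genGraph 𝒯₂ = shiftGraph p μ k)
    (hhist : HistoryFormula p 𝒯) (hhist₂ : HistoryFormula p 𝒯₂) :
    ∃ C : ℝ, 0 < C ∧
      ∀ q : DelayE H p, (∃ y, (q.1, y) ∈ genGraph V) →
      ∀ F F' : ℝ → H, (∀ᵐ σ ∂lam, q.2 σ = F σ) → IsW1pRep p F F' → F 0 = q.1 →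
      ∀ t ∈ Set.Icc (0:ℝ) (-σ₀),
        ‖Phi μ k (histFun p 𝒯 q F t) - Phi μ k (histFun p 𝒯₂ q F t)‖ ≤
          C * t * max ‖q.2‖ ‖q.1‖ :=
  delay_terms_comparison_general p V μ hμsupp k hkmeas hknorm σ₀ κ hκ habs 𝒯 𝒯₂ h𝒯sg h𝒯₂sg

end
end

section
/- Lipschitz continuity of the delayed term along the solution: In the linear delay framework with the additional regularity assumptions below, there is a constant C > 0, independent of the initial data, such that for every (x,f) ∈ 𝒟 the map [0,−σ₀] ∋ s ↦ Φu_s ∈ H, where u_s := 𝒫₂𝒯(s)(x,f), is Lipschitz continuous with constant C(‖x‖_B + ‖f‖_{Lip(H)} + ‖f‖_{W^{1,p}(H)}). -/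
open MeasureTheory Filter Set

noncomputable section

variable {H : Type*} [NormedAddCommGroup H] [InnerProductSpace ℝ H] [CompleteSpace H]

/-!
For `(x, f) ∈ 𝒟` the pair `(x, f)` lies in the domain of `𝒢`, with
`‖𝒢(x, f)‖ ≤ ‖Bx‖ + μ(ℝ) ‖f‖_∞ + ‖f'‖_{L^p}`. By uniform boundedness `‖𝒯(r)‖ ≤ M` on `[0, -σ₀]`,
so the orbit `r ↦ 𝒯(r)(x, f)` is `M ‖𝒢(x, f)‖`-Lipschitz there (mean value inequality with the
right derivative `𝒯(r) 𝒢(x, f)`). Gluing its first component to the Lipschitz history `f` at `0`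
makes the solution `u` Lipschitz on `[-1, -σ₀]`, hence `‖u_s(σ) - u_t(σ)‖ ≤ Lip(u) |s - t|`
uniformly in `σ ∈ [-1, 0]`; integrating against `‖k‖ ≤ 1` and the finite measure `μ` bounds
`‖Φ u_s - Φ u_t‖`.
-/

open scoped NNReal Topology

namespace MeasureTheory

variable {α 𝕜 X Y : Type*} [MeasurableSpace α] [NontriviallyNormedField 𝕜]
  [NormedAddCommGroup X] [NormedSpace 𝕜 X] [NormedAddCommGroup Y] [NormedSpace 𝕜 Y]
  {k : α → X →L[𝕜] Y} {G : α → X}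

theorem StronglyMeasurable.clm_apply_of_forall (hk : ∀ x, StronglyMeasurable fun a => k a x)
    (hG : StronglyMeasurable G) : StronglyMeasurable fun a => k a (G a) := by
  have hsimple (s : SimpleFunc α X) : StronglyMeasurable fun a => k a (s a) := by
    induction s using SimpleFunc.induction with
    | @const c A hA =>
      convert (hk c).indicator hA using 1
      funext a
      by_cases h : a ∈ A <;> simp [SimpleFunc.piecewise_apply, Set.indicator, h]
    | @add f g _ hf hg =>
      simp only [SimpleFunc.coe_add, Pi.add_apply, map_add]
      exact hf.add hg
  exact stronglyMeasurable_of_tendsto atTop (fun n => hsimple (hG.approx n))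
    (tendsto_pi_nhds.2 fun a => ((k a).continuous.tendsto _).comp (hG.tendsto_approx a))

theorem AEStronglyMeasurable.clm_apply_of_forall {μ : Measure α}
    (hk : ∀ x, StronglyMeasurable fun a => k a x) (hG : AEStronglyMeasurable G μ) :
    AEStronglyMeasurable (fun a => k a (G a)) μ :=
  ⟨_, hG.stronglyMeasurable_mk.clm_apply_of_forall hk, by
    filter_upwards [hG.ae_eq_mk] with a ha
    rw [ha]⟩

end MeasureTheory

theorem LipschitzOnWith.Icc_union_Icc {X : Type*} [PseudoMetricSpace X] {f : ℝ → X} {K : ℝ≥0}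
    {a b c : ℝ} (hab : LipschitzOnWith K f (Icc a b)) (hbc : LipschitzOnWith K f (Icc b c)) :
    LipschitzOnWith K f (Icc a c) := by
  have key : ∀ x ∈ Icc a c, ∀ y ∈ Icc a c, x ≤ y → dist (f x) (f y) ≤ K * dist x y := by
    intro x hx y hy hxy
    rcases le_total y b with hyb | hby
    · exact hab.dist_le_mul x ⟨hx.1, hxy.trans hyb⟩ y ⟨hy.1, hyb⟩
    rcases le_total b x with hbx | hxb
    · exact hbc.dist_le_mul x ⟨hbx, hx.2⟩ y ⟨hby, hy.2⟩
    have hb₁ : b ∈ Icc a b := ⟨hx.1.trans hxb, le_rfl⟩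
    have hb₂ : b ∈ Icc b c := ⟨le_rfl, hby.trans hy.2⟩
    calc dist (f x) (f y) ≤ dist (f x) (f b) + dist (f b) (f y) := dist_triangle _ _ _
      _ ≤ K * dist x b + K * dist b y :=
        add_le_add (hab.dist_le_mul x ⟨hx.1, hxb⟩ b hb₁) (hbc.dist_le_mul b hb₂ y ⟨hby, hy.2⟩)
      _ = K * dist x y := by
        simp only [Real.dist_eq, abs_of_nonpos (sub_nonpos.2 hxb),
          abs_of_nonpos (sub_nonpos.2 hby), abs_of_nonpos (sub_nonpos.2 hxy)]
        ring
  refine LipschitzOnWith.of_dist_le_mul fun x hx y hy => ?_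
  rcases le_total x y with hxy | hyx
  · exact key x hx y hy hxy
  · rw [dist_comm, dist_comm x]
    exact key y hy x hx hyx

namespace IsC0Semigroup

variable {X : Type*} [NormedAddCommGroup X] [NormedSpace ℝ X] {T : ℝ → X →L[ℝ] X}

theorem exists_norm_le [CompleteSpace X] (hT : IsC0Semigroup T) (c : ℝ) :
    ∃ M : ℝ≥0, ∀ r ∈ Icc 0 c, ‖T r‖ ≤ M := by
  obtain ⟨M, hM⟩ := banach_steinhaus (g := fun r : Icc 0 c => T r) fun x => by
    obtain ⟨C, hC⟩ :=
      isCompact_Icc.exists_bound_of_continuousOn ((hT.2.2 x).mono fun r hr => hr.1)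
    exact ⟨C, fun r => hC r r.2⟩
  exact ⟨M.toNNReal, fun r hr => (hM ⟨r, hr⟩).trans (Real.le_coe_toNNReal M)⟩

theorem hasDerivWithinAt_orbit (hT : IsC0Semigroup T) {q y : X} (hqy : (q, y) ∈ genGraph T)
    {r : ℝ} (hr : 0 ≤ r) : HasDerivWithinAt (fun t => T t q) (T r y) (Ici r) r := by
  have hshift : Tendsto (· - r) (𝓝[>] r) (𝓝[>] 0) := by
    simpa using (continuous_sub_right r).continuousWithinAt.tendsto_nhdsWithin (x := r)
      (s := Ioi r) (t := Ioi 0) fun t ht => sub_pos.2 ht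
  rw [← hasDerivWithinAt_Ioi_iff_Ici, hasDerivWithinAt_iff_tendsto_slope,
    sdiff_singleton_eq_self self_notMem_Ioi]
  refine (((T r).continuous.tendsto y).comp (Tendsto.comp hqy hshift)).congr' ?_
  filter_upwards [self_mem_nhdsWithin] with t (ht : r < t)
  have hsplit : T t = (T r).comp (T (t - r)) := by
    simpa using hT.2.1 r hr (t - r) (sub_nonneg.2 ht.le)
  simp [slope_def_module, hsplit]

theorem lipschitzOnWith_orbit (hT : IsC0Semigroup T) {q y : X} (hqy : (q, y) ∈ genGraph T)
    {c : ℝ} {M : ℝ≥0} (hM : ∀ r ∈ Icc 0 c, ‖T r‖ ≤ M) :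
    LipschitzOnWith (M * ‖y‖₊) (fun t => T t q) (Icc 0 c) := by
  have key : ∀ a ∈ Icc 0 c, ∀ b ∈ Icc a c, ‖T b q - T a q‖ ≤ M * ‖y‖ * (b - a) := fun a ha =>
    norm_image_sub_le_of_norm_deriv_right_le_segment
      ((hT.2.2 q).mono fun r hr => ha.1.trans hr.1)
      (fun r hr => hT.hasDerivWithinAt_orbit hqy (ha.1.trans hr.1))
      fun r hr => (T r).le_of_opNorm_le (hM r ⟨ha.1.trans hr.1, hr.2.le⟩) y
  refine LipschitzOnWith.of_dist_le_mul fun a ha b hb => ?_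
  rw [dist_eq_norm, Real.dist_eq, NNReal.coe_mul, coe_nnnorm]
  rcases le_total a b with hab | hba
  · rw [norm_sub_rev, abs_of_nonpos (sub_nonpos.2 hab), neg_sub]
    exact key a ha b ⟨hab, hb.2⟩
  · rw [abs_of_nonneg (sub_nonneg.2 hba)]
    exact key b hb a ⟨hba, ha.2⟩

end IsC0Semigroup

section FunctionNorms

variable {E : Type*} [NormedAddCommGroup E] {F : ℝ → E}

theorem lipConst_nonneg (F : ℝ → E) : 0 ≤ lipConst F :=
  Real.sInf_nonneg fun _ hL => hL.1

theorem lipschitzOnWith_lipConst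
    (h : ∃ L, 0 ≤ L ∧ ∀ σ₁ ∈ Icc (-1:ℝ) 0, ∀ σ₂ ∈ Icc (-1:ℝ) 0, ‖F σ₁ - F σ₂‖ ≤ L * |σ₁ - σ₂|) :
    LipschitzOnWith (lipConst F).toNNReal F (Icc (-1) 0) := by
  obtain ⟨L, hL⟩ := h
  refine LipschitzOnWith.of_dist_le_mul fun x hx y hy => ?_
  rw [dist_eq_norm, Real.dist_eq, Real.coe_toNNReal _ (lipConst_nonneg F)]
  rcases eq_or_ne x y with rfl | hxy
  · simp
  have hd : 0 < |x - y| := abs_pos.2 (sub_ne_zero.2 hxy)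
  rw [← div_le_iff₀ hd]
  exact le_csInf ⟨L, hL⟩ fun L' hL' => (div_le_iff₀ hd).2 (hL'.2 x hx y hy)

theorem lipConst_le_LipNormH (F : ℝ → E) : lipConst F ≤ LipNormH F :=
  le_add_of_nonneg_left (Real.iSup_nonneg fun _ => norm_nonneg _)

theorem norm_le_iSup_norm_of_continuousOn {s : Set ℝ} (hs : IsCompact s) (hF : ContinuousOn F s)
    {σ : ℝ} (hσ : σ ∈ s) : ‖F σ‖ ≤ ⨆ τ : s, ‖F τ‖ := by
  refine le_ciSup (f := fun τ : s => ‖F τ‖) ?_ ⟨σ, hσ⟩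
  rw [← image_eq_range (fun τ => ‖F τ‖) s]
  exact (hs.image_of_continuousOn hF.norm).bddAbove

theorem LpNormOn_nonneg (p : ℝ) (F : ℝ → E) : 0 ≤ LpNormOn p F :=
  Real.rpow_nonneg (setIntegral_nonneg measurableSet_Icc fun _ _ => by positivity) _

theorem norm_toLp_eq_LpNormOn {p : ℝ} (hp : 0 < p) (hF : MemLp F (ENNReal.ofReal p) lam) :
    ‖hF.toLp F‖ = LpNormOn p F := by
  rw [Lp.norm_toLp, hF.eLpNorm_eq_integral_rpow_norm (by simpa using hp) ENNReal.ofReal_ne_top,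
    ENNReal.toReal_ofReal hp.le, LpNormOn, one_div]
  exact ENNReal.toReal_ofReal (Real.rpow_nonneg (integral_nonneg fun _ => by positivity) _)

/-- `‖x‖_B + ‖f‖_{Lip(H)} + ‖f‖_{W^{1,p}(H)}`, with `Bx` and `F' = f'` passed explicitly. -/
def initialDataNorm (p : ℝ) (x Bx : E) (F F' : ℝ → E) : ℝ :=
  (‖x‖ + ‖Bx‖) + LipNormH F + W1pNormH p F F'

theorem lipConst_le_initialDataNorm (p : ℝ) (x Bx : E) (F F' : ℝ → E) :
    lipConst F ≤ initialDataNorm p x Bx F F' := by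
  have := lipConst_le_LipNormH F
  have := LpNormOn_nonneg p F
  have := LpNormOn_nonneg p F'
  unfold initialDataNorm W1pNormH
  linarith [norm_nonneg x, norm_nonneg Bx]

end FunctionNorms

theorem integrable_clm_apply_of_continuousOn {𝕜 X Y : Type*} [NontriviallyNormedField 𝕜]
    [NormedAddCommGroup X] [NormedSpace 𝕜 X] [NormedAddCommGroup Y] [NormedSpace 𝕜 Y]
    {μ : Measure ℝ} [IsFiniteMeasure μ] {s : Set ℝ} (hs : IsCompact s) (hμs : μ sᶜ = 0)
    {k : ℝ → X →L[𝕜] Y} (hk : ∀ x, StronglyMeasurable fun σ => k σ x) {C : ℝ}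
    (hkC : ∀ σ, ‖k σ‖ ≤ C) {G : ℝ → X} (hG : ContinuousOn G s) :
    Integrable (fun σ => k σ (G σ)) μ := by
  have hs_ae : ∀ᵐ σ ∂μ, σ ∈ s := mem_ae_iff.2 hμs
  have hGm : AEStronglyMeasurable G μ := by
    simpa only [Measure.restrict_eq_self_of_ae_mem hs_ae] using
      hG.aestronglyMeasurable hs.measurableSet (μ := μ)
  obtain ⟨B, hB⟩ := hs.exists_bound_of_continuousOn hG
  refine Integrable.of_bound (hGm.clm_apply_of_forall hk) (C * B) ?_
  filter_upwards [hs_ae] with σ hσ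
  exact ((k σ).le_of_opNorm_le (hkC σ) _).trans
    (mul_le_mul_of_nonneg_left (hB σ hσ) ((norm_nonneg _).trans (hkC σ)))

section DelayOperator

variable {E : Type*} [NormedAddCommGroup E] [InnerProductSpace ℝ E] {μ : Measure ℝ}
  {k : ℝ → E →L[ℝ] E}

theorem norm_Phi_le [IsFiniteMeasure μ] {s : Set ℝ} (hμs : μ sᶜ = 0) (hk : ∀ σ, ‖k σ‖ ≤ 1)
    {G : ℝ → E} {ε : ℝ} (hG : ∀ σ ∈ s, ‖G σ‖ ≤ ε) : ‖Phi μ k G‖ ≤ μ.real univ * ε := by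
  rw [mul_comm]
  refine norm_integral_le_of_norm_le_const ?_
  filter_upwards [mem_ae_iff.2 hμs] with σ hσ
  exact ((k σ).le_of_opNorm_le (hk σ) _).trans (by simpa using hG σ hσ)

theorem norm_Phi_sub_le_s12 [IsFiniteMeasure μ] {s : Set ℝ} (hs : IsCompact s) (hμs : μ sᶜ = 0)
    (hkm : ∀ x, StronglyMeasurable fun σ => k σ x) (hk : ∀ σ, ‖k σ‖ ≤ 1) {G₁ G₂ : ℝ → E}
    (hG₁ : ContinuousOn G₁ s) (hG₂ : ContinuousOn G₂ s) {ε : ℝ}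
    (hG : ∀ σ ∈ s, ‖G₁ σ - G₂ σ‖ ≤ ε) : ‖Phi μ k G₁ - Phi μ k G₂‖ ≤ μ.real univ * ε := by
  have hsub : Phi μ k G₁ - Phi μ k G₂ = Phi μ k (G₁ - G₂) := by
    simp only [Phi, Pi.sub_apply, map_sub]
    exact (integral_sub (integrable_clm_apply_of_continuousOn hs hμs hkm hk hG₁)
      (integrable_clm_apply_of_continuousOn hs hμs hkm hk hG₂)).symm
  rw [hsub]
  exact norm_Phi_le hμs hk hG

end DelayOperator

section DelayEquation

variable {E : Type*} [NormedAddCommGroup E] [InnerProductSpace ℝ E] {p : ℝ}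
  [Fact (1 ≤ ENNReal.ofReal p)]

/-- The solution `u` on `[-1, ∞)`, so that `histFun p T q F t = delaySolution p T q F (t + ·)`. -/
def delaySolution (p : ℝ) [Fact (1 ≤ ENNReal.ofReal p)] (T : ℝ → DelayE E p →L[ℝ] DelayE E p)
    (q : DelayE E p) (F : ℝ → E) (r : ℝ) : E :=
  if 0 < r then (T r q).1 else F r

variable {T : ℝ → DelayE E p →L[ℝ] DelayE E p} {q y : DelayE E p} {F : ℝ → E}

theorem lipschitzOnWith_delaySolution (hT : IsC0Semigroup T) (hqy : (q, y) ∈ genGraph T)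
    (hF0 : F 0 = q.1) {L : ℝ≥0} (hF : LipschitzOnWith L F (Icc (-1) 0)) {c : ℝ} {M : ℝ≥0}
    (hM : ∀ r ∈ Icc 0 c, ‖T r‖ ≤ M) :
    LipschitzOnWith (max L (M * ‖y‖₊)) (delaySolution p T q F) (Icc (-1) c) := by
  have hpast : EqOn (delaySolution p T q F) F (Icc (-1) 0) := fun r hr => if_neg hr.2.not_gt
  have hfuture : EqOn (delaySolution p T q F) (fun r => (T r q).1) (Icc 0 c) := by
    intro r hr
    rcases hr.1.eq_or_lt with rfl | hr₀
    · simp [delaySolution, hF0, hT.1]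
    · exact if_pos hr₀
  have horbit : LipschitzOnWith (M * ‖y‖₊) (fun r => (T r q).1) (Icc 0 c) := by
    simpa only [one_mul, Function.comp_def] using
      LipschitzWith.prod_fst.comp_lipschitzOnWith (hT.lipschitzOnWith_orbit hqy hM)
  refine LipschitzOnWith.Icc_union_Icc (b := 0) (fun x hx y hy => ?_) fun x hx y hy => ?_
  · rw [hpast hx, hpast hy]
    exact (hF.weaken (le_max_left _ _)) hx hy
  · rw [hfuture hx, hfuture hy]
    exact (horbit.weaken (le_max_right _ _)) hx hy

theorem norm_Phi_histFun_sub_le {μ : Measure ℝ} [IsFiniteMeasure μ]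
    (hμ : μ (Icc (-1) 0)ᶜ = 0) {k : ℝ → E →L[ℝ] E} (hkm : ∀ x, StronglyMeasurable fun σ => k σ x)
    (hk : ∀ σ, ‖k σ‖ ≤ 1) (hT : IsC0Semigroup T) (hqy : (q, y) ∈ genGraph T) (hF0 : F 0 = q.1)
    {L : ℝ≥0} (hF : LipschitzOnWith L F (Icc (-1) 0)) {c : ℝ} {M : ℝ≥0}
    (hM : ∀ r ∈ Icc 0 c, ‖T r‖ ≤ M) {s t : ℝ} (hs : s ∈ Icc 0 c) (ht : t ∈ Icc 0 c) :
    ‖Phi μ k (histFun p T q F s) - Phi μ k (histFun p T q F t)‖ ≤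
      μ.real univ * (max L (M * ‖y‖₊) * |s - t|) := by
  have hu := lipschitzOnWith_delaySolution hT hqy hF0 hF hM
  have hshift : ∀ τ ∈ Icc 0 c, MapsTo (τ + ·) (Icc (-1) 0) (Icc (-1) c) :=
    fun τ hτ σ hσ => ⟨by linarith [hτ.1, hσ.1], by linarith [hτ.2, hσ.2]⟩
  show ‖Phi μ k (delaySolution p T q F ∘ (s + ·)) - Phi μ k (delaySolution p T q F ∘ (t + ·))‖ ≤ _
  refine norm_Phi_sub_le_s12 isCompact_Icc hμ hkm hk
    (hu.continuousOn.comp (continuousOn_const.add continuousOn_id) (hshift s hs))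
    (hu.continuousOn.comp (continuousOn_const.add continuousOn_id) (hshift t ht))
    fun σ hσ => ?_
  calc _ ≤ max L (M * ‖y‖₊) * ‖s + σ - (t + σ)‖ := hu.norm_sub_le (hshift s hs hσ) (hshift t ht hσ)
    _ = max L (M * ‖y‖₊) * |s - t| := by rw [add_sub_add_right_eq_sub, Real.norm_eq_abs]

theorem DMem.exists_mem_genGraph_norm_le {V : ℝ → E →L[ℝ] E} {μ : Measure ℝ} [IsFiniteMeasure μ]
    (hμ : μ (Icc (-1) 0)ᶜ = 0) {k : ℝ → E →L[ℝ] E} (hk : ∀ σ, ‖k σ‖ ≤ 1)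
    (hgen : genGraph T = delayGraph p V μ k) {F' BF BF' : ℝ → E} {Bx B2x : E}
    (hD : DMem p V q F F' BF BF' Bx B2x) :
    ∃ y, (q, y) ∈ genGraph T ∧ ‖y‖ ≤ (1 + μ.real univ) * initialDataNorm p q.1 Bx F F' := by
  obtain ⟨hqF, ⟨hF', hFrep⟩, hF0, hBx, -, -, -, -, -, hLip⟩ := hD
  have hp : 0 < p := one_pos.trans_le (ENNReal.one_le_ofReal.1 Fact.out)
  refine ⟨(Bx + Phi μ k F, hF'.toLp F'), ?_, ?_⟩
  · rw [hgen]
    exact ⟨F, F', hqF, hF'.coeFn_toLp, ⟨hF', hFrep⟩, hF0, by simpa using hBx⟩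
  have hΦ : ‖Phi μ k F‖ ≤ μ.real univ * ⨆ σ : Icc (-1:ℝ) 0, ‖F σ‖ := norm_Phi_le hμ hk
    fun σ => norm_le_iSup_norm_of_continuousOn isCompact_Icc
      (lipschitzOnWith_lipConst hLip).continuousOn
  have := Real.iSup_nonneg fun σ : Icc (-1:ℝ) 0 => norm_nonneg (F σ)
  have := lipConst_nonneg F
  have := LpNormOn_nonneg p F
  have := LpNormOn_nonneg p F'
  have : 0 ≤ μ.real univ := measureReal_nonneg
  rw [Prod.norm_def, norm_toLp_eq_LpNormOn hp]
  unfold initialDataNorm LipNormH W1pNormH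
  refine max_le ?_ ?_ <;> nlinarith [norm_add_le Bx (Phi μ k F), norm_nonneg Bx, norm_nonneg q.1]

end DelayEquation

theorem delayed_term_lipschitz_general
    {H : Type*} [NormedAddCommGroup H] [InnerProductSpace ℝ H] [CompleteSpace H]
    (p : ℝ) [Fact (1 ≤ ENNReal.ofReal p)]
    (V : ℝ → H →L[ℝ] H)
    (μ : Measure ℝ) [IsFiniteMeasure μ]
    (hμsupp : μ (Set.Icc (-1:ℝ) 0)ᶜ = 0)
    (k : ℝ → H →L[ℝ] H)
    (hkmeas : ∀ x : H, MeasureTheory.StronglyMeasurable fun σ => k σ x)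
    (hknorm : ∀ σ, ‖k σ‖ ≤ 1)
    (σ₀ : ℝ)
    (𝒯 : ℝ → DelayE H p →L[ℝ] DelayE H p)
    (h𝒯sg : IsC0Semigroup 𝒯)
    (hgen𝒯 : genGraph 𝒯 = delayGraph p V μ k) :
    ∃ C : ℝ, 0 < C ∧
      ∀ (q : DelayE H p) (F F' BF BF' : ℝ → H) (Bx B2x : H),
        DMem p V q F F' BF BF' Bx B2x →
        ∀ s ∈ Set.Icc (0:ℝ) (-σ₀), ∀ t ∈ Set.Icc (0:ℝ) (-σ₀),
          ‖Phi μ k (histFun p 𝒯 q F s) - Phi μ k (histFun p 𝒯 q F t)‖ ≤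
            C * ((‖q.1‖ + ‖Bx‖) + LipNormH F + W1pNormH p F F') * |s - t| := by
  obtain ⟨M, hM⟩ := h𝒯sg.exists_norm_le (-σ₀)
  set m := μ.real univ
  have hm : 0 ≤ m := measureReal_nonneg
  refine ⟨m * (1 + M * (1 + m)) + 1, by positivity, ?_⟩
  intro q F F' BF BF' Bx B2x hD s hs t ht
  obtain ⟨y, hqy, hy⟩ := hD.exists_mem_genGraph_norm_le hμsupp hknorm hgen𝒯
  obtain ⟨-, -, hF0, -, -, -, -, -, -, hLip⟩ := hD
  set N := initialDataNorm p q.1 Bx F F'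
  have hΛ : lipConst F ≤ N := lipConst_le_initialDataNorm p q.1 Bx F F'
  have hN : 0 ≤ N := (lipConst_nonneg F).trans hΛ
  have hK : ((max (lipConst F).toNNReal (M * ‖y‖₊) : ℝ≥0) : ℝ) ≤ (1 + M * (1 + m)) * N := by
    rw [NNReal.coe_max, Real.coe_toNNReal _ (lipConst_nonneg F), NNReal.coe_mul, coe_nnnorm]
    have := mul_le_mul_of_nonneg_left hy M.coe_nonneg
    have := mul_nonneg (mul_nonneg M.coe_nonneg (by linarith : 0 ≤ 1 + m)) hN
    exact max_le (by nlinarith) (by nlinarith)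
  calc _ ≤ m * (max (lipConst F).toNNReal (M * ‖y‖₊) * |s - t|) :=
        norm_Phi_histFun_sub_le hμsupp hkmeas hknorm h𝒯sg hqy hF0
          (lipschitzOnWith_lipConst hLip) hM hs ht
    _ ≤ m * ((1 + M * (1 + m)) * N * |s - t|) := by gcongr
    _ ≤ (m * (1 + M * (1 + m)) + 1) * N * |s - t| := by
        nlinarith [mul_nonneg hN (abs_nonneg (s - t))]

/-- Lipschitz continuity of the delayed term `s ↦ Φ u_s` along the solution. -/
theorem delayed_term_lipschitz
    {H : Type*} [NormedAddCommGroup H] [InnerProductSpace ℝ H] [CompleteSpace H]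
    (p : ℝ) (hp : 1 < p) [Fact (1 ≤ ENNReal.ofReal p)]
    (V : ℝ → H →L[ℝ] H) (hV : IsC0Contraction V)
    (hVdense : Dense {x : H | ∃ y, (x, y) ∈ genGraph V})
    (μ : Measure ℝ) [IsFiniteMeasure μ]
    (hμsupp : μ (Set.Icc (-1:ℝ) 0)ᶜ = 0) (hμatom : 0 < μ {(-1:ℝ)})
    (k : ℝ → H →L[ℝ] H)
    (hkmeas : ∀ x : H, MeasureTheory.StronglyMeasurable fun σ => k σ x)
    (hknorm : ∀ σ, ‖k σ‖ ≤ 1)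
    (σ₀ : ℝ) (hσ₀ : σ₀ ∈ Set.Ioo (-1:ℝ) 0) (κ : ℝ) (hκ : 0 < κ)
    (habs : ∀ E : Set ℝ, MeasurableSet E →
      μ (E ∩ Set.Icc σ₀ 0) ≤ ENNReal.ofReal κ * volume (E ∩ Set.Icc σ₀ 0))
    (hkB : ∃ Ck : ℝ, ∀ σ : ℝ, ∀ x y : H, (x, y) ∈ genGraph V →
      ∃ z, (k σ x, z) ∈ genGraph V ∧ ‖k σ x‖ + ‖z‖ ≤ Ck * (‖x‖ + ‖y‖))
    (𝒯 : ℝ → DelayE H p →L[ℝ] DelayE H p)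
    (h𝒯sg : IsC0Semigroup 𝒯)
    (hgen𝒯 : genGraph 𝒯 = delayGraph p V μ k)
    (hhist : HistoryFormula p 𝒯) :
    ∃ C : ℝ, 0 < C ∧
      ∀ (q : DelayE H p) (F F' BF BF' : ℝ → H) (Bx B2x : H),
        DMem p V q F F' BF BF' Bx B2x →
        ∀ s ∈ Set.Icc (0:ℝ) (-σ₀), ∀ t ∈ Set.Icc (0:ℝ) (-σ₀),
          ‖Phi μ k (histFun p 𝒯 q F s) - Phi μ k (histFun p 𝒯 q F t)‖ ≤
            C * ((‖q.1‖ + ‖Bx‖) + LipNormH F + W1pNormH p F F') * |s - t| :=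
  delayed_term_lipschitz_general p V μ hμsupp k hkmeas hknorm σ₀ 𝒯 h𝒯sg hgen𝒯

end
end

section
/- Abstract first-order convergence from stability, invariance and local error (telescoping/Lady Windermere argument): Let X be a normed space, D ⊆ X a subset, N : D → [0,∞) a function, h₀ > 0, M ≥ 1, ω ∈ ℝ and K ≥ 0. Let T : [0,∞) → (X → X) satisfy T(0) = id and T(s)∘T(r) = T(s+r) for all s,r ≥ 0, and let F : (0,h₀] → (X → X) be a family of one-step maps. Assume: (stability) ‖F(h)^k x − F(h)^k y‖ ≤ M e^{ωkh} ‖x − y‖ for all h ∈ (0,h₀], k ∈ ℕ and x,y ∈ X; (invariance) T(s)(D) ⊆ D and N(T(s)x) ≤ M N(x) for all s ∈ [0,1] and x ∈ D; (local error) ‖F(h)x − T(h)x‖ ≤ K h² N(x) for all h ∈ (0,h₀] and x ∈ D. Then for every t ∈ (0,1], every positive integer n with t/n ≤ h₀, and every x ∈ D: ‖F(t/n)^n x − T(t)x‖ ≤ (M² K e^{|ω|} / n) N(x). -/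
/-! Lady Windermere's fan: with `h = t / n` the semigroup law gives `T t = (T h)^[n]`, and
`(F h)^[n] x - (T h)^[n] x` telescopes into the `n` local errors at the points `T (j h) x`,
each propagated by `(F h)^[n - j - 1]`. Stability bounds the propagation by `M e^{|ω|}`,
invariance gives `N (T (j h) x) ≤ M N x`, and each local error is `O(h²)`, so the total is
`O(n h²) = O(t² / n)`. -/

open Finset

theorem dist_iterate_iterate_le_sum {α : Type*} [PseudoMetricSpace α] (Φ Ψ : α → α)
    (n : ℕ) (x : α) :
    dist (Φ^[n] x) (Ψ^[n] x) ≤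
      ∑ j ∈ range n,
        dist (Φ^[n - (j + 1)] (Φ (Ψ^[j] x))) (Φ^[n - (j + 1)] (Ψ (Ψ^[j] x))) := by
  have fan := dist_le_range_sum_dist (fun j => Φ^[n - j] (Ψ^[j] x)) n
  simp only [Nat.sub_zero, Nat.sub_self, Function.iterate_zero_apply] at fan
  refine fan.trans_eq (sum_congr rfl fun j hj => ?_)
  have hsucc : n - j = n - (j + 1) + 1 := by have := mem_range.1 hj; omega
  rw [hsucc, Function.iterate_succ_apply, Function.iterate_succ_apply']

theorem apply_natCast_mul_eq_iterate {X : Type*} (T : ℝ → X → X) (hT0 : T 0 = id)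
    (hTsg : ∀ s, 0 ≤ s → ∀ r, 0 ≤ r → ∀ x, T s (T r x) = T (s + r) x)
    {h : ℝ} (hh : 0 ≤ h) (k : ℕ) : T (k * h) = (T h)^[k] := by
  induction k with
  | zero => simpa using hT0
  | succ k ih =>
    funext x
    rw [Function.iterate_succ_apply', ← ih, hTsg h hh _ (by positivity)]
    push_cast
    ring_nf

theorem norm_iterate_sub_iterate_le_of_stable {X : Type*} [NormedAddCommGroup X]
    {Φ Ψ : X → X} {y : X} {k : ℕ} {h M ω E : ℝ}
    (hstab : ∀ u v, ‖Φ^[k] u - Φ^[k] v‖ ≤ M * Real.exp (ω * (k * h)) * ‖u - v‖)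
    (hM : 0 ≤ M) (hkh : (k : ℝ) * h ∈ Set.Icc 0 1) (hloc : ‖Φ y - Ψ y‖ ≤ E) :
    ‖Φ^[k] (Φ y) - Φ^[k] (Ψ y)‖ ≤ M * Real.exp |ω| * E :=
  (hstab _ _).trans <| by
    have := (norm_nonneg _).trans hloc
    gcongr
    exact (mul_le_mul_of_nonneg_right (le_abs_self ω) hkh.1).trans
      (mul_le_of_le_one_right (abs_nonneg ω) hkh.2)

theorem abstract_first_order_convergence_general
    {X : Type*} [NormedAddCommGroup X]
    (D : Set X) (N : X → ℝ) (hN : ∀ x ∈ D, 0 ≤ N x)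
    (h₀ : ℝ) (M : ℝ) (hM : 1 ≤ M) (ω : ℝ) (K : ℝ) (hK : 0 ≤ K)
    (T : ℝ → X → X)
    (hT0 : T 0 = id)
    (hTsg : ∀ s, 0 ≤ s → ∀ r, 0 ≤ r → ∀ x, T s (T r x) = T (s + r) x)
    (F : ℝ → X → X)
    (hstab : ∀ h ∈ Set.Ioc (0:ℝ) h₀, ∀ k : ℕ, ∀ x y : X,
      ‖(F h)^[k] x - (F h)^[k] y‖ ≤ M * Real.exp (ω * (k * h)) * ‖x - y‖)
    (hinv : ∀ s ∈ Set.Icc (0:ℝ) 1, ∀ x ∈ D, T s x ∈ D ∧ N (T s x) ≤ M * N x)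
    (hloc : ∀ h ∈ Set.Ioc (0:ℝ) h₀, ∀ x ∈ D, ‖F h x - T h x‖ ≤ K * h ^ 2 * N x) :
    ∀ t ∈ Set.Ioc (0:ℝ) 1, ∀ n : ℕ, 0 < n → t / n ≤ h₀ → ∀ x ∈ D,
      ‖(F (t / n))^[n] x - T t x‖ ≤ M ^ 2 * K * Real.exp |ω| / n * N x := by
  rintro t ⟨ht₀, ht₁⟩ n hn hth₀ x hx
  set h := t / n
  have hn₀ : (0 : ℝ) < n := Nat.cast_pos.2 hn
  have hh : h ∈ Set.Ioc 0 h₀ := ⟨div_pos ht₀ hn₀, hth₀⟩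
  have hnh : n * h = t := mul_div_cancel₀ t hn₀.ne'
  have hflow := apply_natCast_mul_eq_iterate T hT0 hTsg hh.1.le
  have hjh : ∀ j ≤ n, (j : ℝ) * h ∈ Set.Icc 0 1 := fun j hj =>
    ⟨by positivity, by nlinarith [(Nat.cast_le (α := ℝ)).2 hj, hh.1]⟩
  set C := M ^ 2 * K * Real.exp |ω| * N x
  have hterm : ∀ j ∈ range n, dist ((F h)^[n - (j + 1)] (F h ((T h)^[j] x)))
      ((F h)^[n - (j + 1)] (T h ((T h)^[j] x))) ≤ C * h ^ 2 := by
    intro j hj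
    obtain ⟨hyD, hNy⟩ := hinv _ (hjh j (mem_range.1 hj).le) x hx
    rw [← hflow, dist_eq_norm]
    calc _ ≤ M * Real.exp |ω| * (K * h ^ 2 * (M * N x)) :=
          norm_iterate_sub_iterate_le_of_stable (hstab h hh _) (by linarith) (hjh _ (n.sub_le _))
            ((hloc h hh _ hyD).trans (by gcongr))
      _ = C * h ^ 2 := by ring
  have hC : 0 ≤ C := by have := hN x hx; positivity
  calc ‖(F h)^[n] x - T t x‖ = dist ((F h)^[n] x) ((T h)^[n] x) := by
        rw [← hnh, hflow, dist_eq_norm]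
    _ ≤ ∑ _j ∈ range n, C * h ^ 2 :=
        (dist_iterate_iterate_le_sum _ _ n x).trans (sum_le_sum hterm)
    _ = C * t ^ 2 / n := by rw [sum_const, card_range, nsmul_eq_mul, ← hnh]; field_simp
    _ ≤ C / n := by gcongr; exact mul_le_of_le_one_right hC (by nlinarith)
    _ = M ^ 2 * K * Real.exp |ω| / n * N x := by ring

/-- Abstract first-order convergence from stability, invariance and local error
(telescoping / Lady Windermere argument). -/
theorem abstract_first_order_convergence
    {X : Type*} [NormedAddCommGroup X]
    (D : Set X) (N : X → ℝ) (hN : ∀ x ∈ D, 0 ≤ N x)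
    (h₀ : ℝ) (hh₀ : 0 < h₀) (M : ℝ) (hM : 1 ≤ M) (ω : ℝ) (K : ℝ) (hK : 0 ≤ K)
    (T : ℝ → X → X)
    (hT0 : T 0 = id)
    (hTsg : ∀ s, 0 ≤ s → ∀ r, 0 ≤ r → ∀ x, T s (T r x) = T (s + r) x)
    (F : ℝ → X → X)
    (hstab : ∀ h ∈ Set.Ioc (0:ℝ) h₀, ∀ k : ℕ, ∀ x y : X,
      ‖(F h)^[k] x - (F h)^[k] y‖ ≤ M * Real.exp (ω * (k * h)) * ‖x - y‖)
    (hinv : ∀ s ∈ Set.Icc (0:ℝ) 1, ∀ x ∈ D, T s x ∈ D ∧ N (T s x) ≤ M * N x)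
    (hloc : ∀ h ∈ Set.Ioc (0:ℝ) h₀, ∀ x ∈ D, ‖F h x - T h x‖ ≤ K * h ^ 2 * N x) :
    ∀ t ∈ Set.Ioc (0:ℝ) 1, ∀ n : ℕ, 0 < n → t / n ≤ h₀ → ∀ x ∈ D,
      ‖(F (t / n))^[n] x - T t x‖ ≤ M ^ 2 * K * Real.exp |ω| / n * N x :=
  abstract_first_order_convergence_general D N hN h₀ M hM ω K hK T hT0 hTsg F hstab hinv hloc
end
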